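/- arXiv:2501.17571 — 5 statements merged into one kernel-verified Lean document; each statement's English description precedes it below -/
import Mathlib

section
/- Let n ≥ 8, and let μ be a partition of n containing k ≥ 2 distinct parts 1 < d₁ < d₂ < ... < d_k (each greater than 1). Let λ be a partition of n with λ₁ ≥ λ₁' (where λ₁' is the number of parts of λ). Then one of the following holds: (i) k = 2 and there exists an integer m with λ = (m,1^{m-1}), d₁ = m-1, d₂ = m; (ii) n - λ₁' - d₁ ≥ k - 1 and exactly one part of μ equals d₁; (iii) n - λ₁' - d₁ ≥ k. -/
/-- `l` is a partition of `n`: a weakly decreasing list of positive integers with sum `n`. -/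
def IsPartitionOf (n : ℕ) (l : List ℕ) : Prop :=
  l.Pairwise (· ≥ ·) ∧ (∀ x ∈ l, 0 < x) ∧ l.sum = n

/-- Remove the corner box lying at the end of the last row whose length is at least `b`
(used with `b` a part of `l`: this removes a box from the last row of length `b`). -/
def removeCornerAt (l : List ℕ) (b : ℕ) : List ℕ :=
  (l.set (l.countP (fun x => decide (b ≤ x)) - 1) (b - 1)).filter (fun x => decide (0 < x))

/-- Remove the first corner: the corner lying in a longest row. -/
def removeFirstCorner (l : List ℕ) : List ℕ := removeCornerAt l (l.headD 0)

/-- The second largest distinct part of `l`. -/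
def secondVal (l : List ℕ) : ℕ := (l.filter (fun x => decide (x < l.headD 0))).headD 0

/-- Remove the second corner: the corner lying in a row whose length is the
second largest among the row lengths. -/
def removeSecondCorner (l : List ℕ) : List ℕ := removeCornerAt l (secondVal l)

/-- The conjugate (transpose) partition. -/
def conjugatePartition (l : List ℕ) : List ℕ :=
  (List.range (l.headD 0)).map (fun j => l.countP (fun x => decide (j < x)))

/-- Value of the permutation character of `S_n` acting on colorings of `Fin n`
with fiber sizes given by the composition `mu` (the character induced from the
trivial character of the Young subgroup `S_{mu}`). -/
noncomputable def youngPermChar {n : ℕ} (mu : List ℕ) (σ : Equiv.Perm (Fin n)) : ℤ :=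
  (Set.ncard {f : Fin n → ℕ |
    (∀ i, f (σ i) = f i) ∧ ∀ j : ℕ, Set.ncard {i : Fin n | f i = j} = mu.getD j 0} : ℤ)

/-- The irreducible character `χ^λ` of `S_n` associated with the partition `lam`,
defined by the Jacobi–Trudi determinant `χ^λ = det(h_{λ_i - i + j})`, expanded
as a signed sum over permutations of Young-subgroup permutation characters. -/
noncomputable def chiLambda {n : ℕ} (lam : List ℕ) (σ : Equiv.Perm (Fin n)) : ℤ :=
  ∑ w : Equiv.Perm (Fin lam.length),
    if ∀ i : Fin lam.length, (i : ℕ) ≤ lam.getD i 0 + (w i : ℕ) then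
      ((Equiv.Perm.sign w : ℤ)) *
        youngPermChar ((List.finRange lam.length).map
          (fun (i : Fin lam.length) => lam.getD (i : ℕ) 0 + ((w i : ℕ)) - (i : ℕ))) σ
    else 0

/-- The cycle type of a permutation including fixed points as cycles of length 1. -/
def fullCycleType {n : ℕ} (σ : Equiv.Perm (Fin n)) : Multiset ℕ :=
  σ.cycleType + Multiset.replicate (n - σ.support.card) 1

open Polynomial

/-!
A partition `λ` with `λ₁ ≥ λ₁'` has at most `(n + 1) / 2` parts, with equality only for the
hook `(m, 1^{m-1})`. On the other side, the distinct parts `d₁ < ⋯ < d_k` of `μ` contribute at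
least `d₁ + d₂ + 4 (k - 2)` to `n`, and `d₁` once more when it is repeated. The three
alternatives then follow by linear arithmetic, the hook being exactly the case where (ii) and
(iii) both fail.
-/

theorem List.Subperm.sum_le_sum {l₁ l₂ : List ℕ} (h : l₁.Subperm l₂) : l₁.sum ≤ l₂.sum := by
  obtain ⟨l, hperm, hsub⟩ := h
  rw [← hperm.sum_eq]
  exact hsub.sum_le_sum fun _ _ => Nat.zero_le _

theorem List.Nodup.cons_subperm_of_two_le_count {α : Type*} [DecidableEq α] {a : α}
    {l₁ l₂ : List α} (hd : l₁.Nodup) (hsub : l₁ ⊆ l₂) (ha : 2 ≤ l₂.count a) :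
    (a :: l₁).Subperm l₂ := by
  refine List.subperm_ext_iff.2 fun x hx => ?_
  have hx₁ : l₁.count x ≤ 1 := List.nodup_iff_count_le_one.1 hd x
  rw [List.count_cons]
  by_cases hxa : x = a
  · subst hxa
    simp only [beq_self_eq_true, if_true]
    omega
  · have hxl₂ : 1 ≤ l₂.count x :=
      List.one_le_count_iff.2 (hsub ((List.mem_cons.1 hx).resolve_left hxa))
    simp only [beq_iff_eq, Ne.symm hxa, if_false]
    omega

theorem List.eq_replicate_one_of_sum_le_length {l : List ℕ} (hpos : ∀ x ∈ l, 0 < x)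
    (hsum : l.sum ≤ l.length) : l = List.replicate l.length 1 := by
  induction l with
  | nil => rfl
  | cons a l ih =>
    have hl : l.length ≤ l.sum :=
      List.length_le_sum_of_one_le l fun x hx => hpos x (List.mem_cons_of_mem a hx)
    simp only [List.sum_cons, List.length_cons] at hsum
    obtain rfl : a = 1 := by have := hpos a List.mem_cons_self; omega
    rw [List.length_cons, List.replicate_succ]
    exact congrArg _ (ih (fun x hx => hpos x (List.mem_cons_of_mem 1 hx)) (by omega))

namespace IsPartitionOf

variable {n : ℕ} {lam : List ℕ}

theorem two_mul_length_le (hlam : IsPartitionOf n lam) (hcol : lam.length ≤ lam.headD 0) :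
    2 * lam.length ≤ n + 1 := by
  obtain ⟨-, hpos, hsum⟩ := hlam
  cases lam with
  | nil => simp
  | cons m t =>
    have ht : t.length ≤ t.sum :=
      List.length_le_sum_of_one_le t fun x hx => hpos x (List.mem_cons_of_mem m hx)
    simp only [List.length_cons, List.headD_cons, List.sum_cons] at hcol hsum ⊢
    omega

theorem eq_hook_of_two_mul_length_eq (hlam : IsPartitionOf n lam)
    (hcol : lam.length ≤ lam.headD 0) (heq : 2 * lam.length = n + 1) :
    lam = lam.length :: List.replicate (lam.length - 1) 1 := by
  obtain ⟨-, hpos, hsum⟩ := hlam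
  cases lam with
  | nil => simp at heq
  | cons m t =>
    have htpos : ∀ x ∈ t, 0 < x := fun x hx => hpos x (List.mem_cons_of_mem m hx)
    have ht : t.length ≤ t.sum := List.length_le_sum_of_one_le t htpos
    simp only [List.length_cons, List.headD_cons, List.sum_cons] at hcol hsum heq ⊢
    obtain rfl : m = t.length + 1 := by omega
    rw [Nat.add_sub_cancel, ← List.eq_replicate_one_of_sum_le_length htpos (by omega)]

end IsPartitionOf

section DistinctParts

variable {k : ℕ} {d : Fin k → ℕ} {μ : List ℕ}

theorem sum_le_sum_of_injective_of_mem (hd : Function.Injective d) (hmem : ∀ i, d i ∈ μ) :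
    ∑ i, d i ≤ μ.sum := by
  have hsub : List.ofFn d ⊆ μ := fun _ hx => List.forall_mem_ofFn_iff.2 hmem _ hx
  simpa only [List.sum_ofFn] using ((List.nodup_ofFn.2 hd).subperm hsub).sum_le_sum

theorem add_sum_le_sum_of_two_le_count (hd : Function.Injective d) (hmem : ∀ i, d i ∈ μ)
    (j : Fin k) (hj : 2 ≤ μ.count (d j)) : d j + ∑ i, d i ≤ μ.sum := by
  have hsub : List.ofFn d ⊆ μ := fun _ hx => List.forall_mem_ofFn_iff.2 hmem _ hx
  simpa only [List.sum_cons, List.sum_ofFn] using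
    ((List.nodup_ofFn.2 hd).cons_subperm_of_two_le_count hsub hj).sum_le_sum

end DistinctParts

theorem StrictMono.apply_zero_add_le {k : ℕ} {d : Fin (k + 1) → ℕ} (hd : StrictMono d)
    (i : Fin (k + 1)) : d 0 + i ≤ d i := by
  induction i using Fin.induction with
  | zero => simp
  | succ i ih =>
    have := hd (Fin.castSucc_lt_succ (i := i))
    simp only [Fin.val_succ, Fin.val_castSucc] at ih ⊢
    omega

theorem StrictMono.add_add_four_mul_le_sum {k : ℕ} {d : Fin (k + 2) → ℕ} (hd : StrictMono d)
    (h0 : 2 ≤ d 0) : d 0 + d 1 + 4 * k ≤ ∑ i, d i := by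
  have htail : 4 * k ≤ ∑ i : Fin k, d i.succ.succ :=
    calc 4 * k = ∑ _i : Fin k, 4 := by simp [mul_comm]
      _ ≤ ∑ i : Fin k, d i.succ.succ := Finset.sum_le_sum fun i _ => by
          have := hd.apply_zero_add_le i.succ.succ
          simp only [Fin.val_succ] at this
          omega
  rw [Fin.sum_univ_succ, Fin.sum_univ_succ]
  simp only [Fin.succ_zero_eq_one]
  omega

theorem stmt0 (n k : ℕ) (hn : 8 ≤ n) (hk : 2 ≤ k)
    (μ lam : List ℕ) (d : Fin k → ℕ)
    (hμ : IsPartitionOf n μ)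
    (hdmono : StrictMono d) (hdgt : ∀ i, 1 < d i)
    (hdparts : ∀ x : ℕ, (x ∈ μ ∧ 1 < x) ↔ ∃ i, d i = x)
    (hlam : IsPartitionOf n lam)
    (hcol : lam.length ≤ lam.headD 0) :
    (k = 2 ∧ ∃ m : ℕ, lam = m :: List.replicate (m - 1) 1 ∧
      d ⟨0, by omega⟩ = m - 1 ∧ d ⟨1, by omega⟩ = m) ∨
    (((k : ℤ) - 1 ≤ (n : ℤ) - lam.length - d ⟨0, by omega⟩) ∧
      μ.count (d ⟨0, by omega⟩) = 1) ∨
    ((k : ℤ) ≤ (n : ℤ) - lam.length - d ⟨0, by omega⟩) := by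
  obtain ⟨j, rfl⟩ : ∃ j, k = j + 2 := ⟨k - 2, by omega⟩
  simp only [Fin.zero_eta, Fin.mk_one]
  have hμsum : μ.sum = n := hμ.2.2
  have hmem : ∀ i, d i ∈ μ := fun i => ((hdparts (d i)).2 ⟨i, rfl⟩).1
  have hd0 : 2 ≤ d 0 := hdgt 0
  have hd01 : d 0 < d 1 := hdmono Fin.zero_lt_one
  have hbound := hdmono.add_add_four_mul_le_sum hd0
  have hsum := hμsum ▸ sum_le_sum_of_injective_of_mem hdmono.injective hmem
  have hlen := hlam.two_mul_length_le hcol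
  rcases Nat.lt_or_ge (μ.count (d 0)) 2 with hc | hc
  · have hc1 : μ.count (d 0) = 1 := by
      have := List.one_le_count_iff.2 (hmem 0)
      omega
    by_cases hgap : lam.length + d 0 + j + 1 ≤ n
    · exact Or.inr (Or.inl ⟨by push_cast; omega, hc1⟩)
    · obtain ⟨rfl, hlen_eq, hd1⟩ :
          j = 0 ∧ lam.length = d 0 + 1 ∧ d 1 = d 0 + 1 := by omega
      refine Or.inl ⟨rfl, lam.length, hlam.eq_hook_of_two_mul_length_eq hcol (by omega),
        by omega, by omega⟩
  · have := hμsum ▸ add_sum_le_sum_of_two_le_count hdmono.injective hmem 0 hc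
    exact Or.inr (Or.inr (by push_cast; omega))
end

section
/- Let n ≥ 12 and suppose there exist k ≥ 2 distinct integers 1 < d₁ < d₂ < ... < d_k whose sum is at most n. Let λ be a partition of n with λ₁ ≥ λ₁' ≥ 2, and let μ be the partition of m := n - d₁ obtained from λ by removing the first corner (the corner in a longest row) d₁ times successively. If n - λ₁ ≥ k, then m - μ₁ ≥ k. -/
open Polynomial

/-!
Let `boxesRightOf c λ = ∑ (λᵢ - c)₊` count the boxes of `λ` beyond column `c`. Removing the first
corner lowers it by one as long as it is positive, so if `μ₁ = c + 1` then `λ` has at least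
`d₁ + 1` boxes beyond column `c`. If only the first row of `λ` reaches beyond column `c`, this gives
`μ₁ + d₁ ≤ λ₁` and the claim follows from `n - λ₁ ≥ k`. Otherwise two rows do, so
`d₁ + 2 μ₁ ≤ n + 1`; then `m - μ₁ < k` would force `n + 1 ≤ d₁ + 2k`, which is incompatible with
`2n ≥ 2k d₁ + k(k - 1)` (the `dᵢ` are distinct and at least `2`) once `n ≥ 12`.
-/

def boxesRightOf (c : ℕ) (l : List ℕ) : ℕ := (l.map (· - c)).sum

section BoxesRightOf

variable (c : ℕ)

@[simp] lemma boxesRightOf_nil : boxesRightOf c [] = 0 := rfl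

@[simp] lemma boxesRightOf_cons (x : ℕ) (l : List ℕ) :
    boxesRightOf c (x :: l) = (x - c) + boxesRightOf c l := rfl

@[simp] lemma boxesRightOf_append (l₁ l₂ : List ℕ) :
    boxesRightOf c (l₁ ++ l₂) = boxesRightOf c l₁ + boxesRightOf c l₂ := by
  simp [boxesRightOf]

@[simp] lemma boxesRightOf_replicate (m a : ℕ) :
    boxesRightOf c (List.replicate m a) = m * (a - c) := by
  simp [boxesRightOf]

lemma boxesRightOf_filter_pos (l : List ℕ) :
    boxesRightOf c (l.filter (fun x => decide (0 < x))) = boxesRightOf c l := by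
  induction l with
  | nil => rfl
  | cons x l ih => rcases Nat.eq_zero_or_pos x with rfl | hx <;> simp [*]

lemma boxesRightOf_le_sum (l : List ℕ) : boxesRightOf c l ≤ l.sum := by
  simpa [boxesRightOf] using List.sum_le_sum (l := l) fun x _ => Nat.sub_le x c

lemma boxesRightOf_eq_zero {l : List ℕ} (hl : ∀ x ∈ l, x ≤ c) : boxesRightOf c l = 0 := by
  simpa [boxesRightOf, List.sum_eq_zero_iff, Nat.sub_eq_zero_iff_le] using hl

end BoxesRightOf

lemma exists_eq_replicate_append {a : ℕ} {l : List ℕ} (hl : l.Pairwise (· ≥ ·))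
    (ha : ∀ x ∈ l, x ≤ a) : ∃ m s, l = List.replicate m a ++ s ∧ ∀ x ∈ s, x < a := by
  induction l with
  | nil => exact ⟨0, [], rfl, by simp⟩
  | cons x l ih =>
    rw [List.pairwise_cons] at hl
    obtain rfl | hxa := (ha x (by simp)).eq_or_lt
    · obtain ⟨m, s, rfl, hs⟩ := ih hl.2 fun y hy => ha y (by simp [hy])
      exact ⟨m + 1, s, rfl, hs⟩
    · refine ⟨0, x :: l, rfl, ?_⟩
      simp only [List.mem_cons, forall_eq_or_imp]
      exact ⟨hxa, fun y hy => (hl.1 y hy).trans_lt hxa⟩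

lemma removeFirstCorner_replicate_append (m a : ℕ) {s : List ℕ} (hs : ∀ x ∈ s, x < a) :
    removeFirstCorner (List.replicate (m + 1) a ++ s) =
      (List.replicate m a ++ (a - 1) :: s).filter (fun x => decide (0 < x)) := by
  have hcount : (List.replicate (m + 1) a ++ s).countP (fun x => decide (a ≤ x)) = m + 1 := by
    rw [List.countP_append, List.countP_replicate, List.countP_eq_zero.2]
    · simp
    · simpa using hs
  have hhead : (List.replicate (m + 1) a ++ s).headD 0 = a := rfl
  rw [removeFirstCorner, hhead, removeCornerAt, hcount, List.replicate_succ']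
  simp [List.set_append_right]

lemma exists_eq_replicate_succ_append {a : ℕ} {t : List ℕ} (hl : (a :: t).Pairwise (· ≥ ·)) :
    ∃ m s, a :: t = List.replicate (m + 1) a ++ s ∧ ∀ x ∈ s, x < a := by
  have ha : ∀ x ∈ a :: t, x ≤ a := by
    simpa using fun x hx => (List.pairwise_cons.1 hl).1 x hx
  obtain ⟨m, s, hl', hs⟩ := exists_eq_replicate_append hl ha
  cases m with
  | zero =>
    simp only [List.replicate_zero, List.nil_append] at hl'
    exact absurd (hs a (hl' ▸ List.mem_cons_self)) (lt_irrefl a)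
  | succ m => exact ⟨m, s, hl', hs⟩

section RemoveFirstCorner

variable {l : List ℕ}

lemma pairwise_removeFirstCorner (hl : l.Pairwise (· ≥ ·)) :
    (removeFirstCorner l).Pairwise (· ≥ ·) := by
  cases l with
  | nil => simp [removeFirstCorner, removeCornerAt]
  | cons a t =>
    obtain ⟨m, s, he, hs⟩ := exists_eq_replicate_succ_append hl
    rw [he] at hl ⊢
    rw [removeFirstCorner_replicate_append m a hs]
    refine List.Pairwise.filter _ ?_
    have hs' : s.Pairwise (· ≥ ·) := (List.pairwise_append.1 hl).2.1
    simp only [List.pairwise_append, List.pairwise_replicate, List.pairwise_cons, List.mem_replicate,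
      List.mem_cons]
    refine ⟨by simp, ⟨fun x hx => by have := hs x hx; omega, hs'⟩, ?_⟩
    rintro _ ⟨-, rfl⟩ y (rfl | hy)
    · omega
    · exact (hs y hy).le

lemma boxesRightOf_removeFirstCorner (c : ℕ) (hl : l.Pairwise (· ≥ ·)) :
    boxesRightOf c (removeFirstCorner l) = boxesRightOf c l - 1 := by
  cases l with
  | nil => simp [removeFirstCorner, removeCornerAt]
  | cons a t =>
    obtain ⟨m, s, he, hs⟩ := exists_eq_replicate_succ_append hl
    rw [he, removeFirstCorner_replicate_append m a hs, boxesRightOf_filter_pos]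
    simp only [boxesRightOf_append, boxesRightOf_replicate, boxesRightOf_cons]
    rcases le_or_gt a c with hac | hca
    · rw [boxesRightOf_eq_zero c fun x hx => ((hs x hx).trans_le hac).le,
        Nat.sub_eq_zero_of_le hac]
      omega
    · rw [add_mul]
      omega

lemma boxesRightOf_iterate_removeFirstCorner (c D : ℕ) (hl : l.Pairwise (· ≥ ·)) :
    boxesRightOf c (removeFirstCorner^[D] l) = boxesRightOf c l - D := by
  induction D generalizing l with
  | zero => rfl
  | succ D ih =>
    rw [Function.iterate_succ_apply, ih (pairwise_removeFirstCorner hl),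
      boxesRightOf_removeFirstCorner c hl, Nat.sub_sub, Nat.add_comm 1 D]

end RemoveFirstCorner

lemma head_iterate_removeFirstCorner_le {l : List ℕ} (hl : l.Pairwise (· ≥ ·)) {D : ℕ}
    (hD : D ≤ l.sum) :
    (removeFirstCorner^[D] l).headD 0 + D ≤ l.headD 0 ∨
      D + 2 * (removeFirstCorner^[D] l).headD 0 ≤ l.sum + 1 := by
  set μ := removeFirstCorner^[D] l with hμ
  clear_value μ
  obtain hH | hpos := (μ.headD 0).eq_zero_or_pos
  · right; omega
  obtain ⟨c, hc⟩ := Nat.exists_eq_add_one_of_ne_zero hpos.ne'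
  -- `μ` still has a box in column `c + 1`, so `l` has at least `D + 1` boxes beyond column `c`.
  have hμc : 1 ≤ boxesRightOf c μ := by
    cases μ with
    | nil => simp at hc
    | cons x t => simp only [List.headD_cons] at hc; simp [hc]
  have hlc : D + 1 ≤ boxesRightOf c l := by
    rw [hμ, boxesRightOf_iterate_removeFirstCorner c D hl] at hμc
    omega
  rw [hc]
  match l, hl with
  | [], _ => simp at hlc
  | [a], _ =>
    simp only [boxesRightOf_cons, boxesRightOf_nil, List.headD_cons] at hlc ⊢
    left; omega
  | a :: b :: t, hl =>
    have hba : b ≤ a := List.rel_of_pairwise_cons hl (by simp)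
    have htb : ∀ x ∈ t, x ≤ b := fun x hx => List.rel_of_pairwise_cons hl.of_cons hx
    have hrest := boxesRightOf_le_sum c t
    simp only [boxesRightOf_cons, List.headD_cons, List.sum_cons] at hlc hrest ⊢
    rcases le_or_gt b c with hbc | hcb
    · rw [boxesRightOf_eq_zero c fun x hx => (htb x hx).trans hbc] at hlc
      left; omega
    · right; omega

lemma StrictMono.apply_zero_add_val_le {k : ℕ} {d : Fin k → ℕ} (hd : StrictMono d) (hk : 0 < k)
    (i : Fin k) : d ⟨0, hk⟩ + i ≤ d i := by
  obtain ⟨i, hi⟩ := i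
  induction i with
  | zero => simp
  | succ i ih =>
    have hstep := hd (show (⟨i, by omega⟩ : Fin k) < ⟨i + 1, hi⟩ from Fin.mk_lt_mk.2 i.lt_succ_self)
    have hi' : d ⟨0, hk⟩ + i ≤ d ⟨i, by omega⟩ := ih (by omega)
    show d ⟨0, hk⟩ + (i + 1) ≤ d ⟨i + 1, hi⟩
    omega

lemma StrictMono.le_two_mul_sum_fin {k : ℕ} {d : Fin k → ℕ} (hd : StrictMono d) (hk : 0 < k) :
    2 * k * d ⟨0, hk⟩ + k * (k - 1) ≤ 2 * ∑ i, d i := by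
  have hsum : ∑ i : Fin k, (d ⟨0, hk⟩ + i) ≤ ∑ i, d i :=
    Finset.sum_le_sum fun i _ => hd.apply_zero_add_val_le hk i
  rw [Finset.sum_add_distrib, Finset.sum_const, Finset.card_univ, Fintype.card_fin, smul_eq_mul,
    Fin.sum_univ_eq_sum_range (fun i => i) k] at hsum
  have := Finset.sum_range_id_mul_two k
  nlinarith

theorem stmt1 (n k : ℕ) (hn : 12 ≤ n) (hk : 2 ≤ k)
    (d : Fin k → ℕ) (hdmono : StrictMono d) (hdgt : ∀ i, 1 < d i)
    (hsum : ∑ i, d i ≤ n)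
    (lam : List ℕ) (hlam : IsPartitionOf n lam)
    (μ : List ℕ) (hμ : μ = removeFirstCorner^[d ⟨0, by omega⟩] lam)
    (ht : (k : ℤ) ≤ (n : ℤ) - lam.headD 0) :
    (k : ℤ) ≤ ((n : ℤ) - d ⟨0, by omega⟩) - μ.headD 0 := by
  obtain ⟨hsorted, -, hn_sum⟩ := hlam
  have hD := hdgt ⟨0, by omega⟩
  have hdist := hdmono.le_two_mul_sum_fin (by omega)
  set D := d ⟨0, by omega⟩
  have hDn : D ≤ lam.sum := by nlinarith
  subst hμ
  rcases head_iterate_removeFirstCorner_le hsorted hDn with h | h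
  · omega
  · by_contra! hlt
    zify [show 1 ≤ k by omega] at hdist hsum h hn hk hD hn_sum
    nlinarith [mul_nonneg (sub_nonneg.2 hk) (sub_nonneg.2 hD)]
end

section
/- Let n ≥ 13, and let λ and μ be partitions of n with λ₁ ≥ λ₁', where μ contains k ≥ 2 distinct parts 1 < d₁ < ... < d_k. Let m = n - d₁ and let α be the partition of m obtained from λ by removing the first corner d₁ - 1 times and then removing either the first or the second corner once. If k = 2, d₂ = m (i.e., the partition obtained from μ by deleting one part equal to d₁ is the single row (m)), and α ∈ {(m), (1^m), (m-1,1), (2,1^{m-2})}, then λ belongs to the explicit list {(n), (n-1,1), (n-2,2), (n-2,1,1), (m,1^{m-1}), (m+1,1^{m-2}), (m,1^{m-2}), (m,2,1^{m-3}), (m-1,1^{m-2}), (m-1,2,1^{m-3}), (m-1,3,1^{m-3}), (m-1,2,2,1^{m-4})}. -/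
open Polynomial

/-! Write `λ'ᵢ = #{parts ≥ i}` for the columns of `λ`. Removing the corner at the end of a row of
length `b` shortens column `b` by one box and leaves the other columns alone. So after the `d₁ - 1`
removals of first corners and the final removal, `λ` and `α` have the same columns left of the last
column of `α`, except that one of them may be a box longer in `λ` (second corner). As the columns
of `α` are known, this fixes or bounds `λ'₁, λ'₂, λ'₃`. Finally `n ≥ λ'₁ + ⋯ + λ'ₖ + (λ₁ - k)`,
`n < 2m` and `λ₁ ≥ λ'₁` force every column of `λ` beyond the third to have length one, so `λ` is
determined by `n` and `λ'₁, λ'₂, λ'₃`. -/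

open List

-- The conjugate partition, 1-indexed: `colLen i l = λ'ᵢ` is the number of parts `≥ i`.
def colLen (i : ℕ) (l : List ℕ) : ℕ := l.countP (i ≤ ·)

section colLen

variable {i j : ℕ} {l : List ℕ}

@[simp] lemma colLen_nil (i : ℕ) : colLen i [] = 0 := rfl

@[simp] lemma colLen_cons (i a : ℕ) (l : List ℕ) :
    colLen i (a :: l) = colLen i l + if i ≤ a then 1 else 0 := by
  simp [colLen, countP_cons]

@[simp] lemma colLen_append (i : ℕ) (l t : List ℕ) :
    colLen i (l ++ t) = colLen i l + colLen i t :=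
  countP_append

@[simp] lemma colLen_replicate (i k a : ℕ) :
    colLen i (replicate k a) = if i ≤ a then k else 0 := by
  induction k with
  | zero => simp
  | succ k ih => simp only [replicate_succ, colLen_cons, ih]; split_ifs <;> rfl

lemma colLen_antitone (h : i ≤ j) (l : List ℕ) : colLen j l ≤ colLen i l :=
  countP_mono_left fun x _ hx => by simp only [decide_eq_true_eq] at *; omega

lemma colLen_one_eq_length (hl : ∀ x ∈ l, 0 < x) : colLen 1 l = l.length :=
  countP_eq_length.mpr fun x hx => by
    simpa [Nat.one_le_iff_ne_zero, Nat.pos_iff_ne_zero] using hl x hx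

lemma colLen_pos_iff (hl : l.Pairwise (· ≥ ·)) (hi : 0 < i) :
    0 < colLen i l ↔ i ≤ l.headD 0 := by
  cases l with
  | nil => simp only [colLen_nil, lt_self_iff_false, headD_nil, false_iff]; omega
  | cons a t =>
    simp only [colLen_cons, headD_cons]
    constructor
    · intro h
      by_contra ha
      have : colLen i t = 0 := countP_eq_zero.mpr fun x hx => by
        have := (pairwise_cons.mp hl).1 x hx
        simp only [decide_eq_true_eq]; omega
      simp [this, ha] at h
    · intro h; simp [h]

lemma colLen_eq_colLen_succ_add_count (i : ℕ) (l : List ℕ) :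
    colLen i l = colLen (i + 1) l + l.count i := by
  induction l with
  | nil => simp
  | cons a t ih =>
    simp only [colLen_cons, count_cons, ih, beq_iff_eq]
    split_ifs <;> omega

lemma eq_of_colLen_eq {l l' : List ℕ} (hs : l.Pairwise (· ≥ ·)) (hs' : l'.Pairwise (· ≥ ·))
    (hp : ∀ x ∈ l, 0 < x) (hp' : ∀ x ∈ l', 0 < x) (h : ∀ i, 0 < i → colLen i l = colLen i l') :
    l = l' := by
  refine Perm.eq_of_pairwise' hs hs' (perm_iff_count.mpr fun i => ?_)
  rcases Nat.eq_zero_or_pos i with rfl | hi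
  · rw [count_eq_zero.mpr fun h0 => (hp 0 h0).false, count_eq_zero.mpr fun h0 => (hp' 0 h0).false]
  · have h₁ := colLen_eq_colLen_succ_add_count i l
    have h₂ := colLen_eq_colLen_succ_add_count i l'
    rw [h i hi, h (i + 1) (by omega)] at h₁
    omega

lemma sum_eq_sum_colLen {M : ℕ} (h : ∀ x ∈ l, x ≤ M) :
    l.sum = ∑ i ∈ Finset.range M, colLen (i + 1) l := by
  induction l with
  | nil => simp
  | cons a t ih =>
    have hrow : ∑ i ∈ Finset.range M, (if i + 1 ≤ a then 1 else 0) = a := by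
      have : (Finset.range M).filter (· < a) = Finset.range a := by
        ext i; simp only [Finset.mem_filter, Finset.mem_range]
        have := h a mem_cons_self; omega
      simp [Finset.sum_boole, this]
    simp only [sum_cons, colLen_cons, Finset.sum_add_distrib, hrow,
      ih fun x hx => h x (mem_cons_of_mem a hx)]
    omega

lemma le_headD_of_mem (hl : l.Pairwise (· ≥ ·)) {x : ℕ} (hx : x ∈ l) : x ≤ l.headD 0 := by
  cases l with
  | nil => simp at hx
  | cons a t =>
    rcases mem_cons.mp hx with rfl | hx
    · simp
    · exact (pairwise_cons.mp hl).1 x hx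

lemma sum_eq_sum_colLen_add_sum_Ico (hl : l.Pairwise (· ≥ ·)) {k : ℕ} (hk : k ≤ l.headD 0) :
    l.sum = ∑ i ∈ Finset.range k, colLen (i + 1) l +
      ∑ i ∈ Finset.Ico k (l.headD 0), colLen (i + 1) l := by
  rw [Finset.sum_range_add_sum_Ico _ hk]
  exact sum_eq_sum_colLen fun x hx => le_headD_of_mem hl hx

lemma sum_colLen_add_le {n k : ℕ} (hl : IsPartitionOf n l) (hk : k ≤ l.headD 0) :
    ∑ i ∈ Finset.range k, colLen (i + 1) l + (l.headD 0 - k) ≤ n := by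
  have htail : ∑ _i ∈ Finset.Ico k (l.headD 0), 1 ≤
      ∑ i ∈ Finset.Ico k (l.headD 0), colLen (i + 1) l :=
    Finset.sum_le_sum fun i hi => (colLen_pos_iff hl.1 i.add_one_pos).mpr
      (Finset.mem_Ico.mp hi).2
  rw [← hl.2.2, sum_eq_sum_colLen_add_sum_Ico hl.1 hk]
  simpa using htail

lemma sum_colLen_add_eq {n k : ℕ} (hl : IsPartitionOf n l) (hk : k ≤ l.headD 0)
    (hk1 : colLen (k + 1) l ≤ 1) :
    ∑ i ∈ Finset.range k, colLen (i + 1) l + (l.headD 0 - k) = n := by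
  have htail : ∀ i ∈ Finset.Ico k (l.headD 0), colLen (i + 1) l = 1 := fun i hi => by
    have hi := Finset.mem_Ico.mp hi
    have := (colLen_pos_iff hl.1 i.add_one_pos).mpr hi.2
    have := colLen_antitone (show k + 1 ≤ i + 1 by omega) l
    omega
  rw [← hl.2.2, sum_eq_sum_colLen_add_sum_Ico hl.1 hk, Finset.sum_congr rfl htail]
  simp

lemma eq_cons_replicate_of_colLen_four_le_one {n : ℕ} (hl : IsPartitionOf n l)
    (h3 : 0 < colLen 3 l) (h4 : colLen 4 l ≤ 1) :
    l = (n + 3 - (colLen 1 l + colLen 2 l + colLen 3 l)) :: (replicate (colLen 3 l - 1) 3 ++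
      replicate (colLen 2 l - colLen 3 l) 2 ++ replicate (colLen 1 l - colLen 2 l) 1) := by
  have hhead : 3 ≤ l.headD 0 := (colLen_pos_iff hl.1 (by omega)).mp h3
  have hsum := sum_colLen_add_eq hl hhead h4
  simp only [Finset.sum_range_succ, Finset.sum_range_zero, Nat.reduceAdd] at hsum
  have h21 := colLen_antitone (show 1 ≤ 2 by omega) l
  have h32 := colLen_antitone (show 2 ≤ 3 by omega) l
  apply eq_of_colLen_eq hl.1 ?_ hl.2.1 ?_
  · intro i hi
    simp only [colLen_cons, colLen_append, colLen_replicate]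
    rcases Nat.lt_or_ge i 4 with hi4 | hi4
    · interval_cases i <;> split_ifs <;> omega
    · have hpos := colLen_pos_iff hl.1 (i := i) (by omega)
      have := colLen_antitone hi4 l
      split_ifs <;> omega
  · simp only [pairwise_cons, pairwise_append, pairwise_replicate, mem_append, mem_replicate]
    grind
  · simp only [mem_cons, mem_append, mem_replicate]
    grind

end colLen

section removeCorner

variable {l : List ℕ} {b : ℕ}

lemma exists_eq_append_cons_of_mem (hl : l.Pairwise (· ≥ ·)) (hb : b ∈ l) :
    ∃ p s, l = p ++ b :: s ∧ (∀ x ∈ p, b ≤ x) ∧ ∀ x ∈ s, x < b := by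
  induction l with
  | nil => simp at hb
  | cons a t ih =>
    obtain ⟨ha, ht⟩ := pairwise_cons.mp hl
    by_cases hbt : b ∈ t
    · obtain ⟨p, s, rfl, hp, hs⟩ := ih ht hbt
      exact ⟨a :: p, s, rfl, by simpa using ⟨ha b hbt, hp⟩, hs⟩
    · obtain rfl : b = a := by simpa [hbt] using hb
      exact ⟨[], t, rfl, by simp, fun x hx =>
        lt_of_le_of_ne (ha x hx) (by rintro rfl; exact hbt hx)⟩

lemma removeCornerAt_append_cons {p s : List ℕ} (hp : ∀ x ∈ p, b ≤ x) (hs : ∀ x ∈ s, x < b) :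
    removeCornerAt (p ++ b :: s) b = (p ++ (b - 1) :: s).filter (0 < ·) := by
  have hcount : (p ++ b :: s).countP (b ≤ ·) - 1 = p.length := by
    rw [countP_append, countP_eq_length.mpr (by simpa using hp),
      countP_cons_of_pos (by simp), countP_eq_zero.mpr (by simpa using hs)]
    simp
  rw [removeCornerAt, hcount, set_append_right _ _ le_rfl]
  simp

lemma colLen_filter_pos {i : ℕ} (hi : 0 < i) (l : List ℕ) :
    colLen i (l.filter (0 < ·)) = colLen i l := by
  rw [colLen, countP_filter]
  exact countP_congr fun x _ => by simp only [Bool.and_eq_true, decide_eq_true_eq]; omega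

lemma sum_filter_pos (l : List ℕ) : (l.filter (0 < ·)).sum = l.sum := by
  induction l with
  | nil => rfl
  | cons a t ih => rcases Nat.eq_zero_or_pos a with rfl | ha <;> simp_all

lemma colLen_removeCornerAt (hl : l.Pairwise (· ≥ ·)) (hb : b ∈ l) {i : ℕ} (hi : 0 < i) :
    colLen i (removeCornerAt l b) + (if i = b then 1 else 0) = colLen i l := by
  obtain ⟨p, s, rfl, hp, hs⟩ := exists_eq_append_cons_of_mem hl hb
  rw [removeCornerAt_append_cons hp hs, colLen_filter_pos hi]
  simp only [colLen_append, colLen_cons]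
  split_ifs <;> omega

lemma isPartitionOf_removeCornerAt {n : ℕ} (hl : IsPartitionOf (n + 1) l) (hb : b ∈ l) :
    IsPartitionOf n (removeCornerAt l b) := by
  have hbpos := hl.2.1 b hb
  obtain ⟨hsorted, -, hsum⟩ := hl
  obtain ⟨p, s, rfl, hp, hs⟩ := exists_eq_append_cons_of_mem hsorted hb
  rw [removeCornerAt_append_cons hp hs]
  refine ⟨Pairwise.filter _ ?_, fun x hx => by simpa using (mem_filter.mp hx).2, ?_⟩
  · simp only [pairwise_append, pairwise_cons] at hsorted ⊢
    refine ⟨hsorted.1, ⟨fun x hx => by have := hs x hx; omega, hsorted.2.1.2⟩, ?_⟩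
    intro x hx y hy
    rcases mem_cons.mp hy with rfl | hy
    · have := hp x hx; omega
    · exact hsorted.2.2 x hx y (mem_cons_of_mem _ hy)
  · rw [sum_filter_pos]
    simp only [sum_append, sum_cons] at hsum ⊢
    omega

end removeCorner

-- `b = 0`, or any `b ≥ α₁`, means that the columns agree without exception.
def ColumnsAgreeExcept (l α : List ℕ) (b : ℕ) : Prop :=
  (∀ i, 0 < i → colLen i α ≤ colLen i l) ∧
    ∀ i, 0 < i → i < α.headD 0 → colLen i l = colLen i α + if i = b then 1 else 0

namespace ColumnsAgreeExcept

variable {l β α : List ℕ} {b : ℕ}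

protected lemma refl (l : List ℕ) : ColumnsAgreeExcept l l 0 :=
  ⟨fun _ _ => le_rfl, fun i hi _ => by simp [hi.ne']⟩

lemma headD_le (h : ColumnsAgreeExcept l α b) (hl : l.Pairwise (· ≥ ·)) :
    α.headD 0 ≤ l.headD 0 := by
  cases α with
  | nil => simp
  | cons a t =>
    rcases Nat.eq_zero_or_pos a with rfl | ha
    · simp
    · refine (colLen_pos_iff hl ha).mp (lt_of_lt_of_le ?_ (h.1 a ha))
      simp

lemma of_headD_le (h : ColumnsAgreeExcept l α b) (hb : α.headD 0 ≤ b) :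
    ColumnsAgreeExcept l α 0 :=
  ⟨h.1, fun i hi hiα => by simpa [show i ≠ b by omega, show i ≠ 0 by omega] using h.2 i hi hiα⟩

lemma trans (h₁ : ColumnsAgreeExcept l β 0) (hβ : β.Pairwise (· ≥ ·))
    (h₂ : ColumnsAgreeExcept β α b) : ColumnsAgreeExcept l α b := by
  refine ⟨fun i hi => (h₂.1 i hi).trans (h₁.1 i hi), fun i hi hiα => ?_⟩
  have hiβ : i < β.headD 0 := lt_of_lt_of_le hiα (h₂.headD_le hβ)
  rw [h₁.2 i hi hiβ, if_neg (by omega), add_zero, h₂.2 i hi hiα]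

end ColumnsAgreeExcept

lemma columnsAgreeExcept_removeCornerAt {l : List ℕ} {b : ℕ} (hl : l.Pairwise (· ≥ ·))
    (hb : b ∈ l) : ColumnsAgreeExcept l (removeCornerAt l b) b :=
  ⟨fun i hi => by have := colLen_removeCornerAt hl hb hi; omega,
    fun i hi _ => (colLen_removeCornerAt hl hb hi).symm⟩

lemma headD_mem {l : List ℕ} (hl : l ≠ []) : l.headD 0 ∈ l := by
  cases l with
  | nil => exact absurd rfl hl
  | cons a t => simp

lemma IsPartitionOf.ne_nil {n : ℕ} {l : List ℕ} (hl : IsPartitionOf (n + 1) l) : l ≠ [] := by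
  rintro rfl; simp [IsPartitionOf] at hl

lemma isPartitionOf_removeFirstCorner {n : ℕ} {l : List ℕ} (hl : IsPartitionOf (n + 1) l) :
    IsPartitionOf n (removeFirstCorner l) :=
  isPartitionOf_removeCornerAt hl (headD_mem hl.ne_nil)

lemma columnsAgreeExcept_removeFirstCorner {l : List ℕ} (hl : l.Pairwise (· ≥ ·)) (hne : l ≠ []) :
    ColumnsAgreeExcept l (removeFirstCorner l) 0 :=
  have h := columnsAgreeExcept_removeCornerAt hl (headD_mem hne)
  h.of_headD_le (h.headD_le hl)

lemma isPartitionOf_and_columnsAgreeExcept_iterate_removeFirstCorner {n : ℕ} {l : List ℕ} :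
    ∀ {s : ℕ}, IsPartitionOf (n + s) l →
      IsPartitionOf n (removeFirstCorner^[s] l) ∧
        ColumnsAgreeExcept l (removeFirstCorner^[s] l) 0
  | 0, hl => ⟨hl, .refl l⟩
  | s + 1, hl => by
    obtain ⟨hβ, hlβ⟩ := isPartitionOf_and_columnsAgreeExcept_iterate_removeFirstCorner
      (s := s) (n := n + 1) (by rwa [Nat.add_right_comm])
    rw [Function.iterate_succ_apply']
    exact ⟨isPartitionOf_removeFirstCorner hβ,
      hlβ.trans hβ.1 (columnsAgreeExcept_removeFirstCorner hβ.1 hβ.ne_nil)⟩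

lemma removeCornerAt_replicate_zero (k : ℕ) {a : ℕ} (ha : 0 < a) :
    removeCornerAt (replicate (k + 1) a) 0 = replicate k a := by
  have hcount : (replicate (k + 1) a).countP (0 ≤ ·) = k + 1 := by simp
  rw [removeCornerAt, hcount, replicate_succ', Nat.add_sub_cancel,
    set_append_right _ _ (by simp)]
  simp [ha]

lemma eq_replicate_of_filter_lt_headD_eq_nil {l : List ℕ} (hl : l.Pairwise (· ≥ ·))
    (hf : l.filter (· < l.headD 0) = []) : l = replicate l.length (l.headD 0) :=
  eq_replicate_iff.mpr ⟨rfl, fun x hx => le_antisymm (le_headD_of_mem hl hx)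
    (by simpa using filter_eq_nil_iff.mp hf x hx)⟩

/-- If the diagram is a rectangle, `removeSecondCorner` deletes its last row; the sum condition
forces that row to be a single box. -/
lemma columnsAgreeExcept_removeSecondCorner {m : ℕ} {l : List ℕ} (hl : IsPartitionOf (m + 1) l)
    (hα : (removeSecondCorner l).sum = m) :
    ColumnsAgreeExcept l (removeSecondCorner l) (secondVal l) := by
  cases hf : l.filter (· < l.headD 0) with
  | cons x r =>
    have hx : x ∈ l := (mem_filter.mp (hf ▸ mem_cons_self : x ∈ l.filter _)).1
    have hsv : secondVal l = x := by rw [secondVal, hf]; rfl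
    rw [removeSecondCorner, hsv]
    exact columnsAgreeExcept_removeCornerAt hl.1 hx
  | nil =>
    have hrect := eq_replicate_of_filter_lt_headD_eq_nil hl.1 hf
    have hsv : secondVal l = 0 := by rw [secondVal, hf]; rfl
    obtain ⟨-, hpos, hsum⟩ := hl
    generalize l.headD 0 = a at hrect
    obtain ⟨k, hk⟩ : ∃ k, l.length = k + 1 :=
      Nat.exists_eq_add_one.mpr (length_pos_iff.mpr (by rintro rfl; simp at hsum))
    have ha : 0 < a := hpos a (by rw [hrect]; simp [hk])
    rw [hrect, hk] at hsum
    rw [removeSecondCorner, hsv, hrect, hk, removeCornerAt_replicate_zero k ha] at hα ⊢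
    simp only [sum_replicate, smul_eq_mul] at hsum hα
    obtain rfl : a = 1 := by rw [Nat.succ_mul] at hsum; omega
    refine ⟨fun i hi => by simp only [colLen_replicate]; split_ifs <;> omega, fun i hi hik => ?_⟩
    have : (replicate k 1).headD 0 ≤ 1 := by cases k <;> simp [replicate_succ]
    omega

-- The partitions of `m` whose irreducible characters have degree `1` or `m - 1`.
def lowDegreeShapes (m : ℕ) : List (List ℕ) :=
  [[m], replicate m 1, [m - 1, 1], 2 :: replicate (m - 2) 1]

def exceptionalShapes (n m : ℕ) : List (List ℕ) :=
  [[n], [n - 1, 1], [n - 2, 2], [n - 2, 1, 1],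
    m :: replicate (m - 1) 1,
    (m + 1) :: replicate (m - 2) 1,
    m :: replicate (m - 2) 1,
    m :: 2 :: replicate (m - 3) 1,
    (m - 1) :: replicate (m - 2) 1,
    (m - 1) :: 2 :: replicate (m - 3) 1,
    (m - 1) :: 3 :: replicate (m - 3) 1,
    (m - 1) :: 2 :: 2 :: replicate (m - 4) 1]

section exceptionalShapes

variable {n m : ℕ} {l : List ℕ}

lemma eq_hook_of_le_colLen_one (hm : 3 ≤ m) (hn : n < 2 * m) (hl : IsPartitionOf n l)
    (hcol : colLen 1 l ≤ l.headD 0) (h1 : m ≤ colLen 1 l) : l = m :: replicate (m - 1) 1 := by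
  have hb1 := sum_colLen_add_le hl (k := 1) (by omega)
  have hb2 := sum_colLen_add_le hl (k := 2) (by omega)
  simp only [Finset.sum_range_succ, Finset.sum_range_zero, Nat.reduceAdd] at hb1 hb2
  have h2 := (colLen_pos_iff hl.1 (i := 2) (by omega)).mpr (by omega)
  have h3 := (colLen_pos_iff hl.1 (i := 3) (by omega)).mpr (by omega)
  have h32 := colLen_antitone (show 2 ≤ 3 by omega) l
  have h42 := colLen_antitone (show 2 ≤ 4 by omega) l
  rw [eq_cons_replicate_of_colLen_four_le_one hl h3 (by omega),
    show colLen 1 l = m by omega, show colLen 2 l = 1 by omega, show colLen 3 l = 1 by omega]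
  simp only [tsub_self, replicate_zero, append_nil, nil_append, cons.injEq, and_true]
  omega

lemma mem_exceptionalShapes_of_colLen_one_eq (hm : 5 ≤ m) (hn : n < 2 * m)
    (hl : IsPartitionOf n l) (hcol : colLen 1 l ≤ l.headD 0) (h1 : colLen 1 l = m - 1) :
    l ∈ exceptionalShapes n m := by
  have hb2 := sum_colLen_add_le hl (k := 2) (by omega)
  have hb3 := sum_colLen_add_le hl (k := 3) (by omega)
  have hb4 := sum_colLen_add_le hl (k := 4) (by omega)
  simp only [Finset.sum_range_succ, Finset.sum_range_zero, Nat.reduceAdd] at hb2 hb3 hb4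
  have h3 := (colLen_pos_iff hl.1 (i := 3) (by omega)).mpr (by omega)
  have h21 := colLen_antitone (show 1 ≤ 2 by omega) l
  have h32 := colLen_antitone (show 2 ≤ 3 by omega) l
  have h43 := colLen_antitone (show 3 ≤ 4 by omega) l
  have h4 : colLen 4 l ≤ 1 := by omega
  have hsum := sum_colLen_add_eq hl (k := 3) (by omega) h4
  simp only [Finset.sum_range_succ, Finset.sum_range_zero, Nat.reduceAdd] at hsum
  rw [eq_cons_replicate_of_colLen_four_le_one hl h3 h4, h1]
  generalize colLen 2 l = c2 at *
  generalize colLen 3 l = c3 at *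
  obtain rfl | rfl | rfl : c2 = 1 ∨ c2 = 2 ∨ c2 = 3 := by omega
  · obtain rfl : c3 = 1 := by omega
    obtain h | h | h : n + 3 - (m - 1 + 1 + 1) = m - 1 ∨ n + 3 - (m - 1 + 1 + 1) = m ∨
      n + 3 - (m - 1 + 1 + 1) = m + 1 := by omega
    all_goals rw [h]; simp [exceptionalShapes, Nat.sub_sub]
  · obtain rfl | rfl : c3 = 1 ∨ c3 = 2 := by omega
    · obtain h | h : n + 3 - (m - 1 + 2 + 1) = m - 1 ∨ n + 3 - (m - 1 + 2 + 1) = m := by omega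
      all_goals rw [h]; simp [exceptionalShapes, Nat.sub_sub]
    · rw [show n + 3 - (m - 1 + 2 + 2) = m - 1 by omega]
      simp [exceptionalShapes, Nat.sub_sub]
  · obtain rfl : c3 = 1 := by omega
    rw [show n + 3 - (m - 1 + 3 + 1) = m - 1 by omega]
    simp [exceptionalShapes, Nat.sub_sub]

lemma mem_exceptionalShapes_of_colLen_three_eq_one (hl : IsPartitionOf n l)
    (h3 : colLen 3 l = 1) (h12 : colLen 1 l + colLen 2 l ≤ 4) : l ∈ exceptionalShapes n m := by
  have h21 := colLen_antitone (show 1 ≤ 2 by omega) l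
  have h32 := colLen_antitone (show 2 ≤ 3 by omega) l
  have h43 := colLen_antitone (show 3 ≤ 4 by omega) l
  rw [eq_cons_replicate_of_colLen_four_le_one hl (by omega) (by omega), h3]
  generalize colLen 1 l = c1 at *
  generalize colLen 2 l = c2 at *
  obtain ⟨rfl, rfl⟩ | ⟨rfl, rfl⟩ | ⟨rfl, rfl⟩ | ⟨rfl, rfl⟩ :
      (c1 = 1 ∧ c2 = 1) ∨ (c1 = 2 ∧ c2 = 1) ∨ (c1 = 3 ∧ c2 = 1) ∨ (c1 = 2 ∧ c2 = 2) := by omega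
  all_goals simp [exceptionalShapes]

theorem mem_exceptionalShapes_of_columnsAgreeExcept {b : ℕ} {α : List ℕ} (hm : 5 ≤ m)
    (hn : n < 2 * m) (hl : IsPartitionOf n l) (hcol : l.length ≤ l.headD 0)
    (hα : α ∈ lowDegreeShapes m) (h : ColumnsAgreeExcept l α b) : l ∈ exceptionalShapes n m := by
  rw [← colLen_one_eq_length hl.2.1] at hcol
  have h21 := colLen_antitone (show 1 ≤ 2 by omega) l
  have h32 := colLen_antitone (show 2 ≤ 3 by omega) l
  simp only [lowDegreeShapes, mem_cons, not_mem_nil, or_false] at hα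
  rcases hα with rfl | rfl | rfl | rfl
  · have hc (i : ℕ) (hi : 0 < i) (him : i < m) : colLen i l = 1 + if i = b then 1 else 0 := by
      simpa [show i ≤ m by omega, add_comm] using h.2 i hi (by simpa using him)
    have c1 := hc 1 (by omega) (by omega)
    have c2 := hc 2 (by omega) (by omega)
    have c3 := hc 3 (by omega) (by omega)
    refine mem_exceptionalShapes_of_colLen_three_eq_one hl ?_ ?_ <;> split_ifs at c1 c2 c3 <;> omega
  · have := h.1 1 one_pos
    simp [eq_hook_of_le_colLen_one (by omega) hn hl hcol (by simpa using this), exceptionalShapes]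
  · have hc (i : ℕ) (hi : 0 < i) (him : i < m - 1) :
        colLen i l = 1 + (if i ≤ 1 then 1 else 0) + if i = b then 1 else 0 := by
      simpa [show i ≤ m - 1 by omega, add_comm, add_left_comm] using h.2 i hi (by simpa using him)
    have c1 := hc 1 (by omega) (by omega)
    have c2 := hc 2 (by omega) (by omega)
    have c3 := hc 3 (by omega) (by omega)
    refine mem_exceptionalShapes_of_colLen_three_eq_one hl ?_ ?_ <;> split_ifs at c1 c2 c3 <;> omega
  · have c1 : colLen 1 l = m - 1 + if 1 = b then 1 else 0 := by
      have := h.2 1 one_pos (by simp)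
      simp only [colLen_cons, colLen_replicate] at this
      simp only [this]; split_ifs <;> omega
    split_ifs at c1
    · simp [eq_hook_of_le_colLen_one (by omega) hn hl hcol (by omega), exceptionalShapes]
    · exact mem_exceptionalShapes_of_colLen_one_eq hm hn hl hcol c1

end exceptionalShapes

lemma sum_of_mem_lowDegreeShapes {m : ℕ} {α : List ℕ} (hm : 2 ≤ m) (hα : α ∈ lowDegreeShapes m) :
    α.sum = m := by
  simp only [lowDegreeShapes, mem_cons, not_mem_nil, or_false] at hα
  rcases hα with rfl | rfl | rfl | rfl <;>
    simp only [sum_cons, sum_nil, sum_replicate, smul_eq_mul, mul_one, add_zero] <;> omega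

theorem stmt3_general (n d1 : ℕ) (hn : 13 ≤ n)
    (lam : List ℕ) (hlam : IsPartitionOf n lam)
    (hcol : lam.length ≤ lam.headD 0)
    (hd1 : 1 < d1) (hd1m : d1 < n - d1)
    (α : List ℕ)
    (hα : α = removeFirstCorner (removeFirstCorner^[d1 - 1] lam) ∨
          α = removeSecondCorner (removeFirstCorner^[d1 - 1] lam))
    (hαmem : α ∈ [[n - d1], List.replicate (n - d1) 1, [n - d1 - 1, 1],
                  2 :: List.replicate (n - d1 - 2) 1]) :
    lam ∈ [[n], [n - 1, 1], [n - 2, 2], [n - 2, 1, 1],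
           (n - d1) :: List.replicate (n - d1 - 1) 1,
           (n - d1 + 1) :: List.replicate (n - d1 - 2) 1,
           (n - d1) :: List.replicate (n - d1 - 2) 1,
           (n - d1) :: 2 :: List.replicate (n - d1 - 3) 1,
           (n - d1 - 1) :: List.replicate (n - d1 - 2) 1,
           (n - d1 - 1) :: 2 :: List.replicate (n - d1 - 3) 1,
           (n - d1 - 1) :: 3 :: List.replicate (n - d1 - 3) 1,
           (n - d1 - 1) :: 2 :: 2 :: List.replicate (n - d1 - 4) 1] := by
  obtain ⟨hβ, hlamβ⟩ := isPartitionOf_and_columnsAgreeExcept_iterate_removeFirstCorner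
    (n := n - d1 + 1) (s := d1 - 1) (l := lam) (by rwa [show n - d1 + 1 + (d1 - 1) = n by omega])
  obtain ⟨b, hb⟩ : ∃ b, ColumnsAgreeExcept lam α b := by
    rcases hα with rfl | rfl
    · exact ⟨0, hlamβ.trans hβ.1 (columnsAgreeExcept_removeFirstCorner hβ.1 hβ.ne_nil)⟩
    · exact ⟨_, hlamβ.trans hβ.1 (columnsAgreeExcept_removeSecondCorner hβ
        (sum_of_mem_lowDegreeShapes (by omega) hαmem))⟩
  exact mem_exceptionalShapes_of_columnsAgreeExcept (by omega) (by omega) hlam hcol hαmem hb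

theorem stmt3 (n d1 : ℕ) (hn : 13 ≤ n)
    (μ lam : List ℕ) (hμ : IsPartitionOf n μ) (hlam : IsPartitionOf n lam)
    (hcol : lam.length ≤ lam.headD 0)
    (hd1 : 1 < d1) (hd1m : d1 < n - d1)
    (hmem : d1 ∈ μ) (herase : μ.erase d1 = [n - d1])
    (α : List ℕ)
    (hα : α = removeFirstCorner (removeFirstCorner^[d1 - 1] lam) ∨
          α = removeSecondCorner (removeFirstCorner^[d1 - 1] lam))
    (hαmem : α ∈ [[n - d1], List.replicate (n - d1) 1, [n - d1 - 1, 1],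
                  2 :: List.replicate (n - d1 - 2) 1]) :
    lam ∈ [[n], [n - 1, 1], [n - 2, 2], [n - 2, 1, 1],
           (n - d1) :: List.replicate (n - d1 - 1) 1,
           (n - d1 + 1) :: List.replicate (n - d1 - 2) 1,
           (n - d1) :: List.replicate (n - d1 - 2) 1,
           (n - d1) :: 2 :: List.replicate (n - d1 - 3) 1,
           (n - d1 - 1) :: List.replicate (n - d1 - 2) 1,
           (n - d1 - 1) :: 2 :: List.replicate (n - d1 - 3) 1,
           (n - d1 - 1) :: 3 :: List.replicate (n - d1 - 3) 1,
           (n - d1 - 1) :: 2 :: 2 :: List.replicate (n - d1 - 4) 1] :=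
  stmt3_general n d1 hn lam hlam hcol hd1 hd1m α hα hαmem
end

section
/- Let T be a skew diagram with m = |T| ≥ 4 boxes such that the Littlewood–Richardson coefficient of T with content (m-1, 1) is nonzero. Then either T is (up to translation) the Young diagram of (m-1,1) or its 180°-rotation, or at least one of the contents (m), (m-2,2), (m-2,1,1) also has nonzero Littlewood–Richardson coefficient for T. -/
open Polynomial

/-- The box `p = (row, column)` (0-indexed) lies in the Young diagram of `l`. -/
def cellOf (l : List ℕ) (p : ℕ × ℕ) : Prop := p.2 < l.getD p.1 0

/-- The box `p` lies in the skew diagram `lam / mu`. -/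
def skewCell (lam mu : List ℕ) (p : ℕ × ℕ) : Prop := cellOf lam p ∧ ¬ cellOf mu p

/-- `q` is read before (or at) `p` in the reverse reading word of a skew tableau:
rows are read top to bottom, each row from right to left. -/
def readBeforeOrAt (p q : ℕ × ℕ) : Prop := q.1 < p.1 ∨ (q.1 = p.1 ∧ p.2 ≤ q.2)

/-- `T` is a Littlewood–Richardson skew tableau of shape `lam / mu` and content `nu`:
a semistandard filling (weakly increasing along rows, strictly increasing down columns,
with `nu.getD (v-1) 0` entries equal to `v`, entries `0` outside the shape) whose reverse
reading word is a lattice word. -/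
def IsLRTableau (lam mu nu : List ℕ) (T : ℕ × ℕ → ℕ) : Prop :=
  (∀ p, ¬ skewCell lam mu p → T p = 0) ∧
  (∀ p, skewCell lam mu p → 1 ≤ T p) ∧
  (∀ i j j', j ≤ j' → skewCell lam mu (i, j) → skewCell lam mu (i, j') →
    T (i, j) ≤ T (i, j')) ∧
  (∀ i i' j, i < i' → skewCell lam mu (i, j) → skewCell lam mu (i', j) →
    T (i, j) < T (i', j)) ∧
  (∀ v : ℕ, Set.ncard {p | skewCell lam mu p ∧ T p = v + 1} = nu.getD v 0) ∧
  (∀ p, skewCell lam mu p → ∀ v : ℕ,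
    Set.ncard {q | skewCell lam mu q ∧ readBeforeOrAt p q ∧ T q = v + 2} ≤
    Set.ncard {q | skewCell lam mu q ∧ readBeforeOrAt p q ∧ T q = v + 1})

/-- The Littlewood–Richardson coefficient `c^λ_{μ,ν}`: the number of
Littlewood–Richardson skew tableaux of shape `lam / mu` and content `nu`. -/
noncomputable def lrCoeff (lam mu nu : List ℕ) : ℕ :=
  Set.ncard {T : ℕ × ℕ → ℕ | IsLRTableau lam mu nu T}

/-- The Young diagram of `l` as a set of boxes in the plane `ℤ × ℤ`. -/
def shapeSetZ (l : List ℕ) : Set (ℤ × ℤ) :=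
  {p | ∃ q : ℕ × ℕ, cellOf l q ∧ p = ((q.1 : ℤ), (q.2 : ℤ))}

/-- The skew diagram `lam / mu` as a set of boxes in the plane `ℤ × ℤ`. -/
def skewSetZ (lam mu : List ℕ) : Set (ℤ × ℤ) :=
  {p | ∃ q : ℕ × ℕ, skewCell lam mu q ∧ p = ((q.1 : ℤ), (q.2 : ℤ))}

/-- `A` is a translate of `B` in the plane. -/
def IsTranslateOf (A B : Set (ℤ × ℤ)) : Prop :=
  ∃ t : ℤ × ℤ, A = (fun p : ℤ × ℤ => (p.1 + t.1, p.2 + t.2)) '' B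

/-- The rotation of a plane set by 180 degrees. -/
def rotate180 (B : Set (ℤ × ℤ)) : Set (ℤ × ℤ) :=
  (fun p : ℤ × ℤ => (-p.1, -p.2)) '' B


/-!
An LR tableau of content `(m - 1, 1)` has a single entry `2`, and column strictness puts it at
the bottom of every vertical domino. So either the shape has no vertical domino, and the
all-ones filling has content `(m)`, or it has exactly one, `(r, c)` over `(r + 1, c)`; then
row `r` starts at column `c` and row `r + 1` ends there. If the shape is not one of these two
rows plus the other cell of the domino (a translate of `(m - 1, 1)` or of its rotation), a
further cell provides the `1`s that the lattice condition needs before new labels: either the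
last two cells of row `r + 1` get a `2` (content `(m - 2, 2)`), or the last cells of two rows
get a `2` and a `3` (content `(m - 2, 1, 1)`).
-/

theorem antitone_getD_of_pairwise_ge {l : List ℕ} (hl : l.Pairwise (· ≥ ·)) :
    Antitone (fun i => l.getD i 0) := by
  intro i j hij
  dsimp only
  rcases lt_or_ge j l.length with hj | hj
  · rw [List.getD_eq_getElem l 0 hj, List.getD_eq_getElem l 0 (hij.trans_lt hj)]
    rcases hij.eq_or_lt with rfl | hlt
    · exact le_rfl
    · exact List.pairwise_iff_getElem.1 hl i j (hij.trans_lt hj) hj hlt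
  · rw [List.getD_eq_default l 0 hj]
    exact Nat.zero_le _

theorem skewCell_iff {lam mu : List ℕ} {i j : ℕ} :
    skewCell lam mu (i, j) ↔ mu.getD i 0 ≤ j ∧ j < lam.getD i 0 := by
  unfold skewCell cellOf
  dsimp only
  omega

theorem finite_setOf_skewCell (lam mu : List ℕ) : {p | skewCell lam mu p}.Finite := by
  refine ((Set.finite_Iio lam.length).prod (Set.finite_Iio lam.sum)).subset fun p hp => ?_
  have hlt : p.2 < lam.getD p.1 0 := hp.1
  have hlen : p.1 < lam.length := by
    by_contra h
    rw [List.getD_eq_default _ _ (not_lt.1 h)] at hlt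
    omega
  rw [List.getD_eq_getElem _ _ hlen] at hlt
  exact ⟨hlen, hlt.trans_le (List.le_sum_of_mem (List.getElem_mem hlen))⟩

theorem IsLRTableau.apply_le_length {lam mu nu : List ℕ} {T : ℕ × ℕ → ℕ}
    (hT : IsLRTableau lam mu nu T) (p : ℕ × ℕ) : T p ≤ nu.length := by
  by_cases hp : skewCell lam mu p
  · by_contra! hlen
    have hlevel := hT.2.2.2.2.1 (T p - 1)
    rw [List.getD_eq_default _ _ (by omega), Set.ncard_eq_zero
      ((finite_setOf_skewCell lam mu).subset fun q hq => hq.1)] at hlevel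
    have hmem : p ∈ {q | skewCell lam mu q ∧ T q = T p - 1 + 1} :=
      ⟨hp, by have := hT.2.1 p hp; omega⟩
    simp [hlevel] at hmem
  · simp [hT.1 p hp]

theorem finite_setOf_isLRTableau (lam mu nu : List ℕ) :
    {T | IsLRTableau lam mu nu T}.Finite := by
  have : Finite {p | skewCell lam mu p} := (finite_setOf_skewCell lam mu).to_subtype
  refine Set.Finite.of_finite_image (f := fun T (p : {p | skewCell lam mu p}) => T p)
    ((Set.Finite.pi (t := fun _ => Set.Iic nu.length) fun _ => Set.finite_Iic _).subset ?_) ?_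
  · rintro _ ⟨T, hT, rfl⟩ p -
    exact hT.apply_le_length p
  · intro T hT T' hT' h
    funext p
    by_cases hp : skewCell lam mu p
    · exact congrFun h ⟨p, hp⟩
    · rw [hT.1 p hp, hT'.1 p hp]

theorem lrCoeff_ne_zero_iff {lam mu nu : List ℕ} :
    lrCoeff lam mu nu ≠ 0 ↔ ∃ T, IsLRTableau lam mu nu T := by
  rw [lrCoeff, ← Nat.pos_iff_ne_zero, Set.ncard_pos (finite_setOf_isLRTableau lam mu nu)]
  rfl

theorem readBeforeOrAt_trans {p q s : ℕ × ℕ} (hpq : readBeforeOrAt p q)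
    (hqs : readBeforeOrAt q s) : readBeforeOrAt p s := by
  unfold readBeforeOrAt at *
  omega

theorem ncard_readBefore_le_of_matching {lam mu : List ℕ} {T : ℕ × ℕ → ℕ}
    (g : ℕ × ℕ → ℕ × ℕ)
    (hg : ∀ q, skewCell lam mu q → 2 ≤ T q →
      skewCell lam mu (g q) ∧ T (g q) + 1 = T q ∧ readBeforeOrAt q (g q))
    (hinj : Set.InjOn g {q | skewCell lam mu q ∧ 2 ≤ T q}) (p : ℕ × ℕ) (v : ℕ) :
    {q | skewCell lam mu q ∧ readBeforeOrAt p q ∧ T q = v + 2}.ncard ≤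
      {q | skewCell lam mu q ∧ readBeforeOrAt p q ∧ T q = v + 1}.ncard := by
  have hsub : {q | skewCell lam mu q ∧ readBeforeOrAt p q ∧ T q = v + 2} ⊆
      {q | skewCell lam mu q ∧ 2 ≤ T q} := fun q ⟨hq, _, hTq⟩ => ⟨hq, by omega⟩
  refine Set.ncard_le_ncard_of_injOn g (fun q ⟨hq, hpq, hTq⟩ => ?_) (hinj.mono hsub)
    ((finite_setOf_skewCell lam mu).subset fun q hq => hq.1)
  obtain ⟨hgq, hTg, hqg⟩ := hg q hq (by omega)
  exact ⟨hgq, readBeforeOrAt_trans hpq hqg, by omega⟩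

open Classical in
theorem lrCoeff_single_ne_zero_of_horizontalStrip {lam mu : List ℕ} {m : ℕ}
    (hcard : {p | skewCell lam mu p}.ncard = m)
    (hstrip : ∀ i i' j, i < i' → skewCell lam mu (i, j) → ¬ skewCell lam mu (i', j)) :
    lrCoeff lam mu [m] ≠ 0 := by
  refine lrCoeff_ne_zero_iff.2 ⟨fun p => if skewCell lam mu p then 1 else 0,
    fun p hp => if_neg hp, fun p hp => (if_pos hp).ge, fun i j j' _ h h' => ?_,
    fun i i' j hii' h h' => (hstrip i i' j hii' h h').elim, fun v => ?_,
    fun p _ => ncard_readBefore_le_of_matching id (fun q hq h2 => ?_) (Set.injOn_id _) p⟩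
  · simp only [if_pos h, if_pos h', le_refl]
  · rcases v with _ | v
    · simpa using hcard
    · convert Set.ncard_empty (ℕ × ℕ)
      · ext p
        simp +contextual
      · simp
  · simp [hq] at h2

open Classical in
noncomputable def markedFilling (lam mu : List ℕ) (x y : ℕ × ℕ) (k : ℕ) (p : ℕ × ℕ) : ℕ :=
  if skewCell lam mu p then (if p = y then k else if p = x then 2 else 1) else 0

section MarkedFilling

variable {lam mu : List ℕ} {x y : ℕ × ℕ} {k : ℕ}

theorem markedFilling_of_not_skewCell {p : ℕ × ℕ} (hp : ¬ skewCell lam mu p) :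
    markedFilling lam mu x y k p = 0 := by
  simp [markedFilling, hp]

theorem markedFilling_of_ne {p : ℕ × ℕ} (hp : skewCell lam mu p) (hpx : p ≠ x) (hpy : p ≠ y) :
    markedFilling lam mu x y k p = 1 := by
  simp [markedFilling, hp, hpx, hpy]

theorem markedFilling_left (hx : skewCell lam mu x) (hxy : x ≠ y) :
    markedFilling lam mu x y k x = 2 := by
  simp [markedFilling, hx, hxy]

theorem markedFilling_right (hy : skewCell lam mu y) : markedFilling lam mu x y k y = k := by
  simp [markedFilling, hy]

theorem one_le_markedFilling (hk : 1 ≤ k) {p : ℕ × ℕ} (hp : skewCell lam mu p) :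
    1 ≤ markedFilling lam mu x y k p := by
  simp only [markedFilling, if_pos hp]
  split_ifs <;> omega

theorem eq_or_eq_of_two_le_markedFilling {p : ℕ × ℕ} (hp : skewCell lam mu p)
    (h : 2 ≤ markedFilling lam mu x y k p) : p = x ∨ p = y := by
  by_contra! hne
  rw [markedFilling_of_ne hp hne.1 hne.2] at h
  omega

theorem ncard_setOf_markedFilling_eq_one (hk : k ≠ 1) (hx : skewCell lam mu x)
    (hy : skewCell lam mu y) (hxy : x ≠ y) :
    {p | skewCell lam mu p ∧ markedFilling lam mu x y k p = 1}.ncard =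
      {p | skewCell lam mu p}.ncard - 2 := by
  have hset : {p | skewCell lam mu p ∧ markedFilling lam mu x y k p = 1} =
      {p | skewCell lam mu p} \ {x, y} := by
    ext p
    by_cases hp : skewCell lam mu p <;> by_cases hpx : p = x <;> by_cases hpy : p = y <;>
      simp_all [markedFilling]
  have hsub : ({x, y} : Set (ℕ × ℕ)) ⊆ {p | skewCell lam mu p} := Set.pair_subset hx hy
  rw [hset, Set.ncard_sdiff hsub, Set.ncard_pair hxy]

theorem ncard_setOf_markedFilling_two (hx : skewCell lam mu x) (hy : skewCell lam mu y)
    (hxy : x ≠ y) (v : ℕ) :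
    {p | skewCell lam mu p ∧ markedFilling lam mu x y 2 p = v + 1}.ncard =
      [{p | skewCell lam mu p}.ncard - 2, 2].getD v 0 := by
  rcases v with _ | _ | v
  · exact ncard_setOf_markedFilling_eq_one (by omega) hx hy hxy
  · have hset : {p | skewCell lam mu p ∧ markedFilling lam mu x y 2 p = 0 + 1 + 1} = {x, y} := by
      ext p
      refine ⟨fun ⟨hp, hp2⟩ => eq_or_eq_of_two_le_markedFilling hp hp2.ge, ?_⟩
      rintro (rfl | rfl)
      · exact ⟨hx, markedFilling_left hx hxy⟩
      · exact ⟨hy, markedFilling_right hy⟩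
    rw [hset, Set.ncard_pair hxy]
    rfl
  · have hempty : {p | skewCell lam mu p ∧ markedFilling lam mu x y 2 p = v + 1 + 1 + 1} = ∅ :=
      Set.eq_empty_of_forall_notMem fun p ⟨hp, hpv⟩ => by
        rcases eq_or_eq_of_two_le_markedFilling hp
          (show 2 ≤ markedFilling lam mu x y 2 p by omega) with rfl | rfl
        · rw [markedFilling_left hx hxy] at hpv; omega
        · rw [markedFilling_right hy] at hpv; omega
    rw [hempty, Set.ncard_empty]
    rfl

theorem ncard_setOf_markedFilling_three (hx : skewCell lam mu x) (hy : skewCell lam mu y)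
    (hxy : x ≠ y) (v : ℕ) :
    {p | skewCell lam mu p ∧ markedFilling lam mu x y 3 p = v + 1}.ncard =
      [{p | skewCell lam mu p}.ncard - 2, 1, 1].getD v 0 := by
  have hTx : markedFilling lam mu x y 3 x = 2 := markedFilling_left hx hxy
  have hTy : markedFilling lam mu x y 3 y = 3 := markedFilling_right hy
  rcases v with _ | _ | _ | v
  · exact ncard_setOf_markedFilling_eq_one (by omega) hx hy hxy
  · refine Set.ncard_eq_one.2 ⟨x, Set.ext fun p => ⟨fun ⟨hp, hp2⟩ => ?_, ?_⟩⟩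
    · rcases eq_or_eq_of_two_le_markedFilling hp (le_of_eq hp2.symm) with rfl | rfl
      · rfl
      · omega
    · rintro rfl
      exact ⟨hx, hTx⟩
  · refine Set.ncard_eq_one.2 ⟨y, Set.ext fun p => ⟨fun ⟨hp, hp3⟩ => ?_, ?_⟩⟩
    · rcases eq_or_eq_of_two_le_markedFilling hp
        (show 2 ≤ markedFilling lam mu x y 3 p by omega) with rfl | rfl
      · omega
      · rfl
    · rintro rfl
      exact ⟨hy, hTy⟩
  · have hempty : {p | skewCell lam mu p ∧ markedFilling lam mu x y 3 p = v + 1 + 1 + 1 + 1} = ∅ :=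
      Set.eq_empty_of_forall_notMem fun p ⟨hp, hpv⟩ => by
        rcases eq_or_eq_of_two_le_markedFilling hp
          (show 2 ≤ markedFilling lam mu x y 3 p by omega) with rfl | rfl <;> omega
    rw [hempty, Set.ncard_empty]
    rfl

theorem ncard_readBefore_markedFilling_le (hx : skewCell lam mu x) (hy : skewCell lam mu y)
    {u w : ℕ × ℕ} (hu : skewCell lam mu u) (hw : skewCell lam mu w) (huw : u ≠ w)
    (hux : markedFilling lam mu x y k u + 1 = markedFilling lam mu x y k x)
    (hwy : markedFilling lam mu x y k w + 1 = markedFilling lam mu x y k y)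
    (hxu : readBeforeOrAt x u) (hyw : readBeforeOrAt y w) (p : ℕ × ℕ) (v : ℕ) :
    {q | skewCell lam mu q ∧ readBeforeOrAt p q ∧ markedFilling lam mu x y k q = v + 2}.ncard ≤
    {q | skewCell lam mu q ∧ readBeforeOrAt p q ∧ markedFilling lam mu x y k q = v + 1}.ncard := by
  refine ncard_readBefore_le_of_matching (fun q => if q = x then u else w) (fun q hq h2 => ?_)
    (fun q hq q' hq' h => ?_) p v
  · by_cases hqx : q = x
    · subst hqx
      simp only [if_pos]
      exact ⟨hu, hux, hxu⟩
    · obtain rfl := (eq_or_eq_of_two_le_markedFilling hq h2).resolve_left hqx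
      simp only [if_neg hqx]
      exact ⟨hw, hwy, hyw⟩
  · have hq := (eq_or_eq_of_two_le_markedFilling hq.1 hq.2)
    have hq' := (eq_or_eq_of_two_le_markedFilling hq'.1 hq'.2)
    by_cases hqx : q = x <;> by_cases hq'x : q' = x <;> simp only [hqx, hq'x, if_pos] at h
    · exact hqx.trans hq'x.symm
    · exact absurd h huw
    · exact absurd h.symm huw
    · exact (hq.resolve_left hqx).trans (hq'.resolve_left hq'x).symm

end MarkedFilling

theorem lrCoeff_sub_two_one_one_ne_zero {lam mu : List ℕ} {m : ℕ}
    (hcard : {p | skewCell lam mu p}.ncard = m) {x y u : ℕ × ℕ}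
    (hx : skewCell lam mu x) (hy : skewCell lam mu y) (hu : skewCell lam mu u)
    (hux : u.1 < x.1) (hxy : x.1 < y.1)
    (hxlast : ∀ j, x.2 ≤ j → skewCell lam mu (x.1, j) → j = x.2)
    (hylast : ∀ j, y.2 ≤ j → skewCell lam mu (y.1, j) → j = y.2)
    (hcol : ∀ i i' j, i < i' → skewCell lam mu (i, j) → skewCell lam mu (i', j) →
      ((i', j) = x ∨ (i', j) = y) ∧ (i, j) ≠ y) :
    lrCoeff lam mu [m - 2, 1, 1] ≠ 0 := by
  have hne : ∀ {p q : ℕ × ℕ}, p.1 < q.1 → p ≠ q := fun h e => by rw [e] at h; omega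
  set T := markedFilling lam mu x y 3
  have hTx : T x = 2 := markedFilling_left hx (hne hxy)
  have hTy : T y = 3 := markedFilling_right hy
  have hT1 : ∀ p, skewCell lam mu p → p ≠ x → p ≠ y → T p = 1 := fun _ => markedFilling_of_ne
  have hpos : ∀ p, skewCell lam mu p → 1 ≤ T p := fun _ => one_le_markedFilling (by omega)
  refine lrCoeff_ne_zero_iff.2 ⟨T, fun p => markedFilling_of_not_skewCell, hpos,
    fun i j j' hjj' h h' => ?_, fun i i' j hii' h h' => ?_,
    hcard ▸ ncard_setOf_markedFilling_three hx hy (hne hxy),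
    fun p _ => ncard_readBefore_markedFilling_le hx hy hu hx (hne hux)
      (show T u + 1 = T x by rw [hT1 u hu (hne hux) (hne (hux.trans hxy)), hTx])
      (show T x + 1 = T y by rw [hTx, hTy]) (Or.inl hux) (Or.inl hxy) p⟩
  · rcases eq_or_ne (i, j) x with rfl | hjx
    · rw [hxlast j' hjj' h']
    rcases eq_or_ne (i, j) y with rfl | hjy
    · rw [hylast j' hjj' h']
    rw [hT1 _ h hjx hjy]
    exact hpos _ h'
  · obtain ⟨hbot | hbot, htop⟩ := hcol i i' j hii' h h'
    · have hjx : (i, j) ≠ x := hbot ▸ hne hii'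
      rw [hbot, hTx, hT1 _ h hjx htop]
      omega
    · rw [hbot, hTy]
      rcases eq_or_ne (i, j) x with hx' | hjx
      · rw [hx', hTx]; omega
      · rw [hT1 _ h hjx htop]; omega

theorem lrCoeff_sub_two_two_ne_zero {lam mu : List ℕ} {m : ℕ}
    (hcard : {p | skewCell lam mu p}.ncard = m) {i j : ℕ} {u v : ℕ × ℕ}
    (hy : skewCell lam mu (i, j)) (hx : skewCell lam mu (i, j + 1))
    (hlast : ∀ j', j + 1 ≤ j' → skewCell lam mu (i, j') → j' = j + 1)
    (hu : skewCell lam mu u) (hv : skewCell lam mu v) (hui : u.1 < i) (hvi : v.1 < i)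
    (huv : u ≠ v)
    (hcol : ∀ i₁ i₂ j', i₁ < i₂ → skewCell lam mu (i₁, j') → skewCell lam mu (i₂, j') →
      i₂ = i ∧ (j' = j ∨ j' = j + 1)) :
    lrCoeff lam mu [m - 2, 2] ≠ 0 := by
  have hxy : (i, j + 1) ≠ (i, j) := by simp
  set T := markedFilling lam mu (i, j + 1) (i, j) 2
  have hT2 : ∀ j', j' = j ∨ j' = j + 1 → T (i, j') = 2 := by
    rintro j' (rfl | rfl)
    · exact markedFilling_right hy
    · exact markedFilling_left hx hxy
  have hT1 : ∀ p : ℕ × ℕ, skewCell lam mu p → ¬ (p.1 = i ∧ (p.2 = j ∨ p.2 = j + 1)) →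
      T p = 1 := fun p hp hpi =>
    markedFilling_of_ne hp (fun h => hpi (by simp [h])) (fun h => hpi (by simp [h]))
  have hpos : ∀ p, skewCell lam mu p → 1 ≤ T p := fun _ => one_le_markedFilling (by omega)
  refine lrCoeff_ne_zero_iff.2 ⟨T, fun p => markedFilling_of_not_skewCell, hpos,
    fun i₀ a b hab ha hb => ?_, fun i₁ i₂ j' hi h₁ h₂ => ?_,
    hcard ▸ ncard_setOf_markedFilling_two hx hy hxy,
    fun p _ => ncard_readBefore_markedFilling_le hx hy hu hv huv
      (show T u + 1 = T (i, j + 1) by rw [hT1 u hu (by omega), hT2 (j + 1) (Or.inr rfl)])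
      (show T v + 1 = T (i, j) by rw [hT1 v hv (by omega), hT2 j (Or.inl rfl)])
      (Or.inl hui) (Or.inl hvi) p⟩
  · by_cases hmk : i₀ = i ∧ (a = j ∨ a = j + 1)
    · obtain ⟨rfl, ha'⟩ := hmk
      have hb' : b = j ∨ b = j + 1 := by
        rcases Nat.lt_or_ge b (j + 1) with h | h
        · omega
        · exact Or.inr (hlast b h hb)
      rw [hT2 a ha', hT2 b hb']
    · rw [hT1 _ ha hmk]
      exact hpos _ hb
  · obtain ⟨rfl, hj'⟩ := hcol i₁ i₂ j' hi h₁ h₂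
    rw [hT1 _ h₁ (by omega), hT2 j' hj']
    omega

theorem mem_skewSetZ_iff {lam mu : List ℕ} {z : ℤ × ℤ} :
    z ∈ skewSetZ lam mu ↔ 0 ≤ z.1 ∧ 0 ≤ z.2 ∧ skewCell lam mu (z.1.toNat, z.2.toNat) := by
  constructor
  · rintro ⟨q, hq, rfl⟩
    simpa using hq
  · rintro ⟨h1, h2, hz⟩
    exact ⟨_, hz, by ext <;> simp [h1, h2]⟩

theorem mem_shapeSetZ_iff {l : List ℕ} {z : ℤ × ℤ} :
    z ∈ shapeSetZ l ↔ 0 ≤ z.1 ∧ 0 ≤ z.2 ∧ cellOf l (z.1.toNat, z.2.toNat) := by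
  constructor
  · rintro ⟨q, hq, rfl⟩
    simpa using hq
  · rintro ⟨h1, h2, hz⟩
    exact ⟨_, hz, by ext <;> simp [h1, h2]⟩

theorem cellOf_hook_iff {n i j : ℕ} : cellOf [n, 1] (i, j) ↔ (i = 0 ∧ j < n) ∨ (i = 1 ∧ j = 0) := by
  unfold cellOf
  rcases i with _ | _ | i <;> simp

theorem mem_image_translate_iff {B : Set (ℤ × ℤ)} {t z : ℤ × ℤ} :
    z ∈ (fun p : ℤ × ℤ => (p.1 + t.1, p.2 + t.2)) '' B ↔ (z.1 - t.1, z.2 - t.2) ∈ B := by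
  constructor
  · rintro ⟨p, hp, rfl⟩
    simpa using hp
  · intro hz
    exact ⟨_, hz, by ext <;> simp⟩

theorem mem_rotate180_iff {B : Set (ℤ × ℤ)} {z : ℤ × ℤ} : z ∈ rotate180 B ↔ (-z.1, -z.2) ∈ B := by
  constructor
  · rintro ⟨p, hp, rfl⟩
    simpa using hp
  · intro hz
    exact ⟨_, hz, by ext <;> simp⟩

theorem isTranslateOf_hook {lam mu : List ℕ} {m r c b : ℕ}
    (hcard : {p | skewCell lam mu p}.ncard = m)
    (hcells : ∀ i j, skewCell lam mu (i, j) ↔ (i = r ∧ c ≤ j ∧ j < b) ∨ (i = r + 1 ∧ j = c)) :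
    IsTranslateOf (skewSetZ lam mu) (shapeSetZ [m - 1, 1]) := by
  have hset : {p | skewCell lam mu p} = insert (r + 1, c) ((fun j => (r, j)) '' Set.Ico c b) := by
    ext ⟨i, j⟩
    simp only [hcells, Set.mem_ofPred_eq, Set.mem_insert_iff, Prod.mk.injEq, Set.mem_image,
      Set.mem_Ico, exists_eq_right_right]
    omega
  rw [hset, Set.ncard_insert_of_notMem (by simp), Set.ncard_image_of_injective _
    (fun _ _ h => (Prod.mk.inj h).2), Set.ncard_Ico_nat] at hcard
  refine ⟨(r, c), Set.ext fun z => ?_⟩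
  rw [mem_image_translate_iff, mem_shapeSetZ_iff, mem_skewSetZ_iff, hcells, cellOf_hook_iff]
  dsimp only
  omega

theorem isTranslateOf_rotate180_hook {lam mu : List ℕ} {m r c a : ℕ}
    (hcard : {p | skewCell lam mu p}.ncard = m)
    (hcells : ∀ i j, skewCell lam mu (i, j) ↔ (i = r ∧ j = c) ∨ (i = r + 1 ∧ a ≤ j ∧ j ≤ c)) :
    IsTranslateOf (skewSetZ lam mu) (rotate180 (shapeSetZ [m - 1, 1])) := by
  have hset : {p | skewCell lam mu p} = insert (r, c) ((fun j => (r + 1, j)) '' Set.Icc a c) := by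
    ext ⟨i, j⟩
    simp only [hcells, Set.mem_ofPred_eq, Set.mem_insert_iff, Prod.mk.injEq, Set.mem_image,
      Set.mem_Icc, exists_eq_right_right]
    omega
  rw [hset, Set.ncard_insert_of_notMem (by simp), Set.ncard_image_of_injective _
    (fun _ _ h => (Prod.mk.inj h).2), Set.ncard_Icc_nat] at hcard
  refine ⟨(r + 1, c), Set.ext fun z => ?_⟩
  rw [mem_image_translate_iff, mem_rotate180_iff, mem_shapeSetZ_iff, mem_skewSetZ_iff, hcells,
    cellOf_hook_iff]
  dsimp only
  omega

theorem skewCell_of_le_of_le {lam mu : List ℕ} (hlam : lam.Pairwise (· ≥ ·))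
    (hmu : mu.Pairwise (· ≥ ·)) {i i' k j : ℕ} (h : skewCell lam mu (i, j))
    (h' : skewCell lam mu (i', j)) (hik : i ≤ k) (hki' : k ≤ i') : skewCell lam mu (k, j) := by
  rw [skewCell_iff] at *
  have := antitone_getD_of_pairwise_ge hmu hik
  have := antitone_getD_of_pairwise_ge hlam hki'
  dsimp only at *
  omega

structure HasUniqueVerticalDomino (lam mu : List ℕ) (r c : ℕ) : Prop where
  top : skewCell lam mu (r, c)
  bottom : skewCell lam mu (r + 1, c)
  unique : ∀ i j, skewCell lam mu (i, j) → skewCell lam mu (i + 1, j) → i = r ∧ j = c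

namespace HasUniqueVerticalDomino

variable {lam mu : List ℕ} {r c m : ℕ}

theorem eq_domino_of_same_column (hlam : lam.Pairwise (· ≥ ·)) (hmu : mu.Pairwise (· ≥ ·))
    (hd : HasUniqueVerticalDomino lam mu r c) {i i' j : ℕ} (hii' : i < i')
    (h : skewCell lam mu (i, j)) (h' : skewCell lam mu (i', j)) : i = r ∧ i' = r + 1 ∧ j = c := by
  have hsucc := skewCell_of_le_of_le hlam hmu h h' (Nat.le_succ i) hii'
  obtain ⟨rfl, rfl⟩ := hd.unique i j h hsucc
  refine ⟨rfl, (Nat.succ_le_of_lt hii').eq_or_lt.elim Eq.symm fun hlt => ?_, rfl⟩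
  have := hd.unique (i + 1) j hsucc (skewCell_of_le_of_le hlam hmu h h' (by omega) hlt)
  omega

theorem le_of_skewCell_top (hmu : mu.Pairwise (· ≥ ·))
    (hd : HasUniqueVerticalDomino lam mu r c) {j : ℕ} (h : skewCell lam mu (r, j)) : c ≤ j := by
  by_contra! hjc
  have hb := hd.bottom
  rw [skewCell_iff] at h hb
  have := antitone_getD_of_pairwise_ge hmu (Nat.le_add_right r 1)
  have := hd.unique r j (skewCell_iff.2 h) (skewCell_iff.2 (by dsimp only at *; omega))
  omega

theorem le_of_skewCell_bottom (hlam : lam.Pairwise (· ≥ ·))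
    (hd : HasUniqueVerticalDomino lam mu r c) {j : ℕ} (h : skewCell lam mu (r + 1, j)) :
    j ≤ c := by
  by_contra! hjc
  have ht := hd.top
  rw [skewCell_iff] at h ht
  have := antitone_getD_of_pairwise_ge hlam (Nat.le_add_right r 1)
  have := hd.unique r j (skewCell_iff.2 (by dsimp only at *; omega)) (skewCell_iff.2 h)
  omega

theorem lrCoeff_sub_two_one_one_of_lower_row (hlam : lam.Pairwise (· ≥ ·))
    (hmu : mu.Pairwise (· ≥ ·)) (hd : HasUniqueVerticalDomino lam mu r c)
    (hcard : {p | skewCell lam mu p}.ncard = m) {w j : ℕ} (hw : r + 1 < w)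
    (hwj : skewCell lam mu (w, j)) : lrCoeff lam mu [m - 2, 1, 1] ≠ 0 := by
  rw [skewCell_iff] at hwj
  refine lrCoeff_sub_two_one_one_ne_zero hcard (x := (r + 1, c)) (y := (w, lam.getD w 0 - 1))
    hd.bottom (skewCell_iff.2 (by omega)) hd.top (by simp) hw
    (fun j' hj' h => le_antisymm (hd.le_of_skewCell_bottom hlam h) hj')
    (fun j' hj' h => by rw [skewCell_iff] at h; dsimp only at *; omega)
    fun i i' j hii' h h' => ?_
  obtain ⟨rfl, rfl, rfl⟩ := hd.eq_domino_of_same_column hlam hmu hii' h h'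
  exact ⟨Or.inl rfl, fun he => by rw [Prod.mk.injEq] at he; omega⟩

theorem lrCoeff_sub_two_one_one_of_upper_row (hlam : lam.Pairwise (· ≥ ·))
    (hmu : mu.Pairwise (· ≥ ·)) (hd : HasUniqueVerticalDomino lam mu r c)
    (hcard : {p | skewCell lam mu p}.ncard = m) {w j : ℕ} (hw : w < r)
    (hwj : skewCell lam mu (w, j)) (hleft : ∀ j < c, ¬ skewCell lam mu (r + 1, j)) :
    lrCoeff lam mu [m - 2, 1, 1] ≠ 0 := by
  have ht := skewCell_iff.1 hd.top
  refine lrCoeff_sub_two_one_one_ne_zero hcard (x := (r, lam.getD r 0 - 1)) (y := (r + 1, c))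
    (skewCell_iff.2 (by omega)) hd.bottom hwj hw (by simp)
    (fun j' hj' h => by rw [skewCell_iff] at h; dsimp only at *; omega)
    (fun j' hj' h => le_antisymm (hd.le_of_skewCell_bottom hlam h) hj')
    fun i i' j hii' h h' => ?_
  obtain ⟨rfl, rfl, rfl⟩ := hd.eq_domino_of_same_column hlam hmu hii' h h'
  exact ⟨Or.inr rfl, by simp⟩

theorem lrCoeff_sub_two_two_of_left (hlam : lam.Pairwise (· ≥ ·)) (hmu : mu.Pairwise (· ≥ ·))
    (hd : HasUniqueVerticalDomino lam mu r c) (hcard : {p | skewCell lam mu p}.ncard = m)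
    {j : ℕ} (hjc : j < c) (hj : skewCell lam mu (r + 1, j)) {v : ℕ × ℕ}
    (hv : skewCell lam mu v) (hvr : v.1 ≤ r) (hvne : v ≠ (r, c)) :
    lrCoeff lam mu [m - 2, 2] ≠ 0 := by
  obtain ⟨c, rfl⟩ : ∃ c', c = c' + 1 := ⟨c - 1, by omega⟩
  have hb := skewCell_iff.1 hd.bottom
  rw [skewCell_iff] at hj
  refine lrCoeff_sub_two_two_ne_zero hcard (skewCell_iff.2 (by omega)) hd.bottom
    (fun j' hj' h => le_antisymm (hd.le_of_skewCell_bottom hlam h) hj') hd.top hv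
    (by simp) (by omega) hvne.symm fun i₁ i₂ j' hi h₁ h₂ => ?_
  obtain ⟨rfl, rfl, rfl⟩ := hd.eq_domino_of_same_column hlam hmu hi h₁ h₂
  exact ⟨rfl, Or.inr rfl⟩

theorem isTranslateOf_hook_of_rows (hlam : lam.Pairwise (· ≥ ·)) (hmu : mu.Pairwise (· ≥ ·))
    (hd : HasUniqueVerticalDomino lam mu r c) (hcard : {p | skewCell lam mu p}.ncard = m)
    (hbelow : ∀ w j, r + 1 < w → ¬ skewCell lam mu (w, j))
    (habove : ∀ w j, w < r → ¬ skewCell lam mu (w, j))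
    (hleft : ∀ j < c, ¬ skewCell lam mu (r + 1, j)) :
    IsTranslateOf (skewSetZ lam mu) (shapeSetZ [m - 1, 1]) := by
  refine isTranslateOf_hook hcard (r := r) (c := c) (b := lam.getD r 0) fun i j =>
    ⟨fun h => ?_, ?_⟩
  · have hi : i = r ∨ i = r + 1 := by
      by_contra! hi
      rcases Nat.lt_or_gt_of_ne hi.1 with hlt | hgt
      · exact habove i j hlt h
      · exact hbelow i j (by omega) h
    rcases hi with rfl | rfl
    · exact Or.inl ⟨rfl, hd.le_of_skewCell_top hmu h, (skewCell_iff.1 h).2⟩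
    · refine Or.inr ⟨rfl, le_antisymm (hd.le_of_skewCell_bottom hlam h) ?_⟩
      by_contra! hjc
      exact hleft j hjc h
  · rintro (⟨rfl, hcj, hj⟩ | ⟨rfl, rfl⟩)
    · exact skewCell_iff.2 ⟨(skewCell_iff.1 hd.top).1.trans hcj, hj⟩
    · exact hd.bottom

theorem isTranslateOf_rotate180_hook_of_rows (hlam : lam.Pairwise (· ≥ ·))
    (hd : HasUniqueVerticalDomino lam mu r c) (hcard : {p | skewCell lam mu p}.ncard = m)
    (hbelow : ∀ w j, r + 1 < w → ¬ skewCell lam mu (w, j))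
    (hup : ∀ v, skewCell lam mu v → v.1 ≤ r → v = (r, c)) :
    IsTranslateOf (skewSetZ lam mu) (rotate180 (shapeSetZ [m - 1, 1])) := by
  refine isTranslateOf_rotate180_hook hcard (r := r) (c := c) (a := mu.getD (r + 1) 0)
    fun i j => ⟨fun h => ?_, ?_⟩
  · rcases le_or_gt i r with hi | hi
    · exact Or.inl (Prod.mk.inj (hup (i, j) h hi))
    · obtain rfl : i = r + 1 := by
        by_contra hne
        exact hbelow i j (by omega) h
      exact Or.inr ⟨rfl, (skewCell_iff.1 h).1, hd.le_of_skewCell_bottom hlam h⟩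
  · rintro (⟨rfl, rfl⟩ | ⟨rfl, haj, hjc⟩)
    · exact hd.top
    · exact skewCell_iff.2 ⟨haj, hjc.trans_lt (skewCell_iff.1 hd.bottom).2⟩

end HasUniqueVerticalDomino

section HookContent

variable {lam mu : List ℕ} {n : ℕ} {T : ℕ × ℕ → ℕ}

theorem IsLRTableau.ncard_skewCell_of_hook (hT : IsLRTableau lam mu [n, 1] T) :
    {p | skewCell lam mu p}.ncard = n + 1 := by
  have hS := finite_setOf_skewCell lam mu
  have hsplit : {p | skewCell lam mu p} =
      {p | skewCell lam mu p ∧ T p = 0 + 1} ∪ {p | skewCell lam mu p ∧ T p = 1 + 1} := by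
    ext p
    refine ⟨fun hp => ?_, by rintro (⟨hp, -⟩ | ⟨hp, -⟩) <;> exact hp⟩
    have := hT.2.1 p hp
    have := hT.apply_le_length p
    simp only [List.length_cons, List.length_nil] at this
    exact (show T p = 0 + 1 ∨ T p = 1 + 1 by omega).imp (⟨hp, ·⟩) (⟨hp, ·⟩)
  have hdisj : Disjoint {p | skewCell lam mu p ∧ T p = 0 + 1}
      {p | skewCell lam mu p ∧ T p = 1 + 1} :=
    Set.disjoint_left.2 fun _ h h' => by have := h.2.symm.trans h'.2; omega
  rw [hsplit, Set.ncard_union_eq hdisj (hS.subset fun p hp => hp.1) (hS.subset fun p hp => hp.1),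
    hT.2.2.2.2.1, hT.2.2.2.2.1]
  rfl

theorem IsLRTableau.hasUniqueVerticalDomino_of_hook (hT : IsLRTableau lam mu [n, 1] T)
    {r c : ℕ} (h : skewCell lam mu (r, c)) (h₁ : skewCell lam mu (r + 1, c)) :
    HasUniqueVerticalDomino lam mu r c := by
  have htwo : ∀ a b, skewCell lam mu (a, b) → skewCell lam mu (a + 1, b) →
      (a + 1, b) ∈ {p | skewCell lam mu p ∧ T p = 1 + 1} := fun a b ha ha₁ => by
    have := hT.2.2.2.1 a (a + 1) b (by omega) ha ha₁
    have := hT.2.1 _ ha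
    have := hT.apply_le_length (a + 1, b)
    simp only [List.length_cons, List.length_nil] at this
    exact ⟨ha₁, by omega⟩
  have hone : {p | skewCell lam mu p ∧ T p = 1 + 1}.ncard ≤ 1 := by
    rw [hT.2.2.2.2.1]; rfl
  refine ⟨h, h₁, fun i j h' h'₁ => ?_⟩
  have := (Set.ncard_le_one_iff ((finite_setOf_skewCell lam mu).subset fun p hp => hp.1)).1
    hone (htwo i j h' h'₁) (htwo r c h h₁)
  simp only [Prod.mk.injEq] at this
  omega

end HookContent

theorem stmt16_general (lam mu : List ℕ)
    (hlam : IsPartitionOf lam.sum lam) (hmu : IsPartitionOf mu.sum mu)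
    (m : ℕ) (hm4 : 4 ≤ m)
    (hlr : lrCoeff lam mu [m - 1, 1] ≠ 0) :
    (IsTranslateOf (skewSetZ lam mu) (shapeSetZ [m - 1, 1]) ∨
     IsTranslateOf (skewSetZ lam mu) (rotate180 (shapeSetZ [m - 1, 1]))) ∨
    (lrCoeff lam mu [m] ≠ 0 ∨ lrCoeff lam mu [m - 2, 2] ≠ 0 ∨
     lrCoeff lam mu [m - 2, 1, 1] ≠ 0) := by
  obtain ⟨T, hT⟩ := lrCoeff_ne_zero_iff.1 hlr
  have hcard : {p | skewCell lam mu p}.ncard = m := by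
    rw [hT.ncard_skewCell_of_hook]
    omega
  by_cases hstrip : ∀ i j, skewCell lam mu (i, j) → ¬ skewCell lam mu (i + 1, j)
  · exact Or.inr (Or.inl (lrCoeff_single_ne_zero_of_horizontalStrip hcard fun i i' j hii' h h' =>
      hstrip i j h (skewCell_of_le_of_le hlam.1 hmu.1 h h' (Nat.le_add_right i 1) hii')))
  push Not at hstrip
  obtain ⟨r, c, hrc, hrc₁⟩ := hstrip
  have hd := hT.hasUniqueVerticalDomino_of_hook hrc hrc₁
  obtain ⟨w, j, hw, hwj⟩ | hbelow := em (∃ w j, r + 1 < w ∧ skewCell lam mu (w, j))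
  · exact Or.inr (Or.inr (Or.inr
      (hd.lrCoeff_sub_two_one_one_of_lower_row hlam.1 hmu.1 hcard hw hwj)))
  push Not at hbelow
  obtain ⟨j, hjc, hj⟩ | hleft := em (∃ j < c, skewCell lam mu (r + 1, j))
  · obtain ⟨v, hv, hvr, hvne⟩ | hup := em (∃ v, skewCell lam mu v ∧ v.1 ≤ r ∧ v ≠ (r, c))
    · exact Or.inr (Or.inr (Or.inl
        (hd.lrCoeff_sub_two_two_of_left hlam.1 hmu.1 hcard hjc hj hv hvr hvne)))
    · push Not at hup
      exact Or.inl (Or.inr (hd.isTranslateOf_rotate180_hook_of_rows hlam.1 hcard hbelow hup))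
  push Not at hleft
  obtain ⟨w, j, hw, hwj⟩ | habove := em (∃ w j, w < r ∧ skewCell lam mu (w, j))
  · exact Or.inr (Or.inr (Or.inr
      (hd.lrCoeff_sub_two_one_one_of_upper_row hlam.1 hmu.1 hcard hw hwj hleft)))
  push Not at habove
  exact Or.inl (Or.inl (hd.isTranslateOf_hook_of_rows hlam.1 hmu.1 hcard hbelow habove hleft))

theorem stmt16 (lam mu : List ℕ)
    (hlam : IsPartitionOf lam.sum lam) (hmu : IsPartitionOf mu.sum mu)
    (hsub : ∀ i : ℕ, mu.getD i 0 ≤ lam.getD i 0)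
    (m : ℕ) (hm : m = lam.sum - mu.sum) (hm4 : 4 ≤ m)
    (hlr : lrCoeff lam mu [m - 1, 1] ≠ 0) :
    (IsTranslateOf (skewSetZ lam mu) (shapeSetZ [m - 1, 1]) ∨
     IsTranslateOf (skewSetZ lam mu) (rotate180 (shapeSetZ [m - 1, 1]))) ∨
    (lrCoeff lam mu [m] ≠ 0 ∨ lrCoeff lam mu [m - 2, 2] ≠ 0 ∨
     lrCoeff lam mu [m - 2, 1, 1] ≠ 0) :=
  stmt16_general lam mu hlam hmu m hm4 hlr
end

section
/- Let σ ∈ S_6 be a 6-cycle and let ρ be the irreducible representation of S_6 corresponding to the partition (3,3). Then the minimal polynomial of ρ(σ) equals (x^6 - 1)/(x^2 + x + 1); that is, the eigenvalues of ρ(σ) are exactly the 6th roots of unity that are not primitive cube roots of unity. -/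
/-!
If `ρ(σ)` has eigenvalue multiplicities `m_η` (`η⁶ = 1`), averaging the powers of `ρ(σ)` against
the characters of `ℤ/6` gives `m_η = (1/6) ∑ₖ η⁻ᵏ χ(σᵏ)`. The values of `χ^{(3,3)}` on the powers
of a 6-cycle are `5, 0, 2, -3, 2, 0`, so `m_η = 0` exactly when `η` is a primitive cube root of
unity. Since `ρ(σ)⁶ = 1`, its minimal polynomial is separable, hence the product of `X - η`
over the eigenvalues, which is `(X⁶ - 1)/(X² + X + 1)`.
-/

namespace Module.End

open Finset

variable {K V : Type*} [Field K] [AddCommGroup V] [Module K V]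

noncomputable def eigenProjection (A : End K V) (n : ℕ) (μ : K) : End K V :=
  (n : K)⁻¹ • ∑ k ∈ range n, μ⁻¹ ^ k • A ^ k

variable {A : End K V} {n : ℕ} {μ : K}

theorem mul_eigenProjection (hA : A ^ n = 1) (hμ : μ ^ n = 1) :
    A * A.eigenProjection n μ = μ • A.eigenProjection n μ := by
  rcases n.eq_zero_or_pos with rfl | hn
  · simp [eigenProjection]
  have hμ0 : μ ≠ 0 := (IsUnit.of_pow_eq_one hμ hn.ne').ne_zero
  set f : ℕ → End K V := fun k => μ⁻¹ ^ k • A ^ k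
  have hshift : ∀ k, A * f k = μ • f (k + 1) := fun k => by
    simp only [f, mul_smul_comm, smul_smul, pow_succ', ← mul_assoc, mul_inv_cancel₀ hμ0, one_mul]
  have hcyclic : ∑ k ∈ range n, f (k + 1) = ∑ k ∈ range n, f k := by
    have := (sum_range_succ' f n).symm.trans (sum_range_succ f n)
    simpa [f, hA, hμ, inv_pow] using this
  calc A * A.eigenProjection n μ = (n : K)⁻¹ • ∑ k ∈ range n, A * f k := by
        rw [eigenProjection, mul_smul_comm, mul_sum]
    _ = (n : K)⁻¹ • μ • ∑ k ∈ range n, f (k + 1) := by simp only [hshift, smul_sum]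
    _ = μ • A.eigenProjection n μ := by rw [hcyclic, smul_comm]; rfl

theorem eigenProjection_apply_mem (hA : A ^ n = 1) (hμ : μ ^ n = 1) (v : V) :
    A.eigenProjection n μ v ∈ A.eigenspace μ :=
  mem_eigenspace_iff.2 (LinearMap.congr_fun (mul_eigenProjection hA hμ) v)

theorem eigenProjection_apply_of_mem (hn : (n : K) ≠ 0) (hμ : μ ≠ 0) {v : V}
    (hv : v ∈ A.eigenspace μ) : A.eigenProjection n μ v = v := by
  have hpow : ∀ k, (A ^ k) v = μ ^ k • v := fun k => by
    induction k with
    | zero => simp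
    | succ k ih =>
      rw [pow_succ', mul_apply, ih, map_smul, mem_eigenspace_iff.1 hv, smul_smul, pow_succ]
  simp [eigenProjection, hpow, smul_smul, hμ, ← Nat.cast_smul_eq_nsmul K, inv_mul_cancel₀ hn]

theorem isProj_eigenProjection (hn : (n : K) ≠ 0) (hA : A ^ n = 1) (hμ : μ ^ n = 1) :
    LinearMap.IsProj (A.eigenspace μ) (A.eigenProjection n μ) where
  map_mem := eigenProjection_apply_mem hA hμ
  map_id _ :=
    eigenProjection_apply_of_mem hn (IsUnit.of_pow_eq_one hμ (by rintro rfl; simp at hn)).ne_zero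

theorem natCast_finrank_eigenspace_of_pow_eq_one [FiniteDimensional K V] (hn : (n : K) ≠ 0)
    (hA : A ^ n = 1) (hμ : μ ^ n = 1) :
    (finrank K (A.eigenspace μ) : K) =
      (n : K)⁻¹ * ∑ k ∈ range n, μ⁻¹ ^ k * LinearMap.trace K V (A ^ k) := by
  rw [← (isProj_eigenProjection hn hA hμ).trace, eigenProjection]
  simp [map_sum]

theorem HasEigenvalue.pow_eq_one (h : A.HasEigenvalue μ) (hA : A ^ n = 1) : μ ^ n = 1 := by
  obtain ⟨v, hv⟩ := h.exists_hasEigenvector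
  have := hv.pow_apply n
  rw [hA, one_apply] at this
  exact smul_left_injective K hv.2 (by simpa using this.symm)

theorem hasEigenvalue_iff_of_pow_eq_one [CharZero K] [FiniteDimensional K V] (hn : n ≠ 0)
    (hA : A ^ n = 1) : A.HasEigenvalue μ ↔
      μ ^ n = 1 ∧ ∑ k ∈ range n, μ⁻¹ ^ k * LinearMap.trace K V (A ^ k) ≠ 0 := by
  have key (hμ : μ ^ n = 1) :
      A.HasEigenvalue μ ↔ ∑ k ∈ range n, μ⁻¹ ^ k * LinearMap.trace K V (A ^ k) ≠ 0 := by
    rw [hasEigenvalue_iff, Ne, ← Submodule.finrank_eq_zero, ← Nat.cast_eq_zero (R := K),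
      natCast_finrank_eigenspace_of_pow_eq_one (Nat.cast_ne_zero.2 hn) hA hμ]
    simp [hn]
  exact ⟨fun h => ⟨h.pow_eq_one hA, (key (h.pow_eq_one hA)).1 h⟩, fun ⟨hμ, h⟩ => (key hμ).2 h⟩

end Module.End

namespace Polynomial

theorem eq_of_monic_of_separable_of_isRoot_iff {K : Type*} [Field K] [IsAlgClosed K] {p q : K[X]}
    (hp : p.Monic) (hq : q.Monic) (hps : p.Separable) (hqs : q.Separable)
    (h : ∀ x, p.IsRoot x ↔ q.IsRoot x) : p = q := by
  have hroots : p.roots = q.roots :=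
    ((nodup_roots hps).ext (nodup_roots hqs)).2 fun x => by
      rw [mem_roots hp.ne_zero, mem_roots hq.ne_zero, h]
  exact eq_of_monic_of_associated hp hq <| associated_of_dvd_dvd
    ((IsAlgClosed.splits p).dvd_of_roots_le_roots hp.ne_zero hroots.le)
    ((IsAlgClosed.splits q).dvd_of_roots_le_roots hq.ne_zero hroots.ge)

theorem isRoot_X_pow_four_sub_X_pow_three_add_X_sub_one_iff {K : Type*} [Field K] [CharZero K]
    {η : K} : (X ^ 4 - X ^ 3 + X - 1 : K[X]).IsRoot η ↔ η ^ 6 = 1 ∧ η ^ 2 + η + 1 ≠ 0 := by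
  simp only [IsRoot, eval_sub, eval_add, eval_pow, eval_X, eval_one]
  refine ⟨fun h => ⟨by linear_combination (η ^ 2 + η + 1) * h, fun ha => ?_⟩, fun ⟨h6, ha⟩ => ?_⟩
  · have : η * (η + 2) = 0 := by linear_combination (h - (η ^ 2 - 2 * η - 1) * ha) / 2
    rcases mul_eq_zero.1 this with h0 | h2
    · simp [h0] at ha
    · rw [eq_neg_of_add_eq_zero_left h2] at ha
      norm_num at ha
  · have : (η ^ 4 - η ^ 3 + η - 1) * (η ^ 2 + η + 1) = 0 := by linear_combination h6
    exact (mul_eq_zero.1 this).resolve_right ha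

end Polynomial

section CharacterThreeThree

open Finset

theorem ncard_fiber_eq_getD_iff {n : ℕ} (mu : List ℕ) (f : Fin n → Fin mu.length) :
    (∀ j : ℕ, {i | (f i : ℕ) = j}.ncard = mu.getD j 0) ↔
      ∀ j : Fin mu.length, #{i | f i = j} = mu.getD j 0 := by
  have hfiber (j : Fin mu.length) : {i | (f i : ℕ) = j}.ncard = #{i | f i = j} := by
    rw [← Set.ncard_coe_finset]
    congr
    ext
    simp [Fin.val_inj]
  refine ⟨fun h j => hfiber j ▸ h j, fun h j => ?_⟩
  rcases lt_or_ge j mu.length with hj | hj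
  · exact (hfiber ⟨j, hj⟩).trans (h ⟨j, hj⟩)
  · rw [List.getD_eq_default _ _ hj, Set.ncard_eq_zero]
    ext i
    simpa using ((f i).isLt.trans_le hj).ne

theorem youngPermChar_eq_card {n : ℕ} (mu : List ℕ) (τ : Equiv.Perm (Fin n)) :
    youngPermChar mu τ = Fintype.card {f : Fin n → Fin mu.length // (∀ i, f (τ i) = f i) ∧
      ∀ j : Fin mu.length, #{i | f i = j} = mu.getD j 0} := by
  have hlt (f : Fin n → ℕ) (hf : ∀ j : ℕ, {i | f i = j}.ncard = mu.getD j 0) (i : Fin n) :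
      f i < mu.length := by
    by_contra! h
    have := hf (f i)
    rw [List.getD_eq_default _ _ h, Set.ncard_eq_zero] at this
    exact this.subset (rfl : f i = f i)
  rw [youngPermChar, ← Nat.card_coe_set_eq, ← Nat.card_eq_fintype_card]
  exact congrArg _ <| Nat.card_congr
    { toFun f := ⟨fun i => ⟨f.1 i, hlt f.1 f.2.2 i⟩, fun i => Fin.ext (f.2.1 i),
        (ncard_fiber_eq_getD_iff mu _).1 f.2.2⟩
      invFun f := ⟨fun i => f.1 i, fun i => congrArg Fin.val (f.2.1 i),
        (ncard_fiber_eq_getD_iff mu f.1).2 f.2.2⟩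
      left_inv _ := rfl
      right_inv _ := rfl }

theorem chiLambda_three_three {n : ℕ} (τ : Equiv.Perm (Fin n)) :
    chiLambda [3, 3] τ = youngPermChar [3, 3] τ - youngPermChar [4, 2] τ := by
  have huniv : (univ : Finset (Equiv.Perm (Fin 2))) = {1, Equiv.swap 0 1} := by decide
  change ∑ w : Equiv.Perm (Fin 2), _ = _
  rw [huniv, sum_pair (by decide), if_pos (by decide), if_pos (by decide)]
  simp [List.finRange_succ, sub_eq_add_neg]

theorem chiLambda_three_three_finRotate_pow (k : Fin 6) :
    chiLambda [3, 3] (finRotate 6 ^ (k : ℕ)) = ![5, 0, 2, -3, 2, 0] k := by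
  rw [chiLambda_three_three, youngPermChar_eq_card, youngPermChar_eq_card]
  fin_cases k <;> decide

theorem sum_inv_pow_mul_chiLambda_finRotate_eq_zero_iff {K : Type*} [Field K] [CharZero K] {η : K}
    (hη : η ^ 6 = 1) :
    ∑ k ∈ range 6, η⁻¹ ^ k * (chiLambda [3, 3] (finRotate 6 ^ k) : K) = 0 ↔
      η ^ 2 + η + 1 = 0 := by
  have hinv : η⁻¹ = η ^ 5 := inv_eq_of_mul_eq_one_right (by rw [← pow_succ', hη])
  have hfactor : ∑ k ∈ range 6, η⁻¹ ^ k * (chiLambda [3, 3] (finRotate 6 ^ k) : K) =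
      (η ^ 2 + η + 1) * (2 * η ^ 2 - 5 * η + 5) := by
    simp only [sum_range, Fin.sum_univ_six, chiLambda_three_three_finRotate_pow, hinv,
      Matrix.cons_val, Fin.coe_ofNat_eq_mod, Nat.reduceMod]
    push_cast
    linear_combination (2 * η ^ 2 * (η ^ 12 + η ^ 6 + 1) - 3 * η ^ 3 * (η ^ 6 + 1) + 2 * η ^ 4) * hη
  rw [hfactor, mul_eq_zero, or_iff_left_iff_imp]
  intro hg
  -- The roots of `2η² - 5η + 5` have modulus `√(5/2)`; explicitly, `η⁶ - 1` reduces modulo it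
  -- to `(93 - 375η)/32`.
  have : η = 31 / 125 := by
    linear_combination (-32 / 375 : K) * hη
      + (32 / 375 : K) * (η ^ 4 / 2 + 5 * η ^ 3 / 4 + 15 * η ^ 2 / 8 + 25 * η / 16 - 25 / 32) * hg
  rw [this] at hg
  norm_num at hg

end CharacterThreeThree

open Polynomial

theorem stmt18 (σ : Equiv.Perm (Fin 6)) (hσ : σ.cycleType = {6})
    (V : Type) [AddCommGroup V] [Module ℂ V] [FiniteDimensional ℂ V]
    (ρ : Representation ℂ (Equiv.Perm (Fin 6)) V)
    (hρ : ∀ τ, LinearMap.trace ℂ V (ρ τ) = (chiLambda [3, 3] τ : ℂ)) :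
    minpoly ℂ (ρ σ : Module.End ℂ V) * (Polynomial.X ^ 2 + Polynomial.X + 1) =
      Polynomial.X ^ 6 - 1 ∧
    (∀ η : ℂ, Module.End.HasEigenvalue (ρ σ : Module.End ℂ V) η ↔
      (η ^ 6 = 1 ∧ η ^ 2 + η + 1 ≠ 0)) := by
  obtain ⟨g, rfl⟩ := isConj_iff.1 (Equiv.Perm.isConj_iff_cycleType_eq.2
    ((cycleType_finRotate (n := 4)).trans hσ.symm))
  set A : Module.End ℂ V := ρ (g * finRotate 6 * g⁻¹)
  have htrace (k : ℕ) : LinearMap.trace ℂ V (A ^ k) = chiLambda [3, 3] (finRotate 6 ^ k) := by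
    rw [← map_pow, conj_pow, ← hρ]
    exact ρ.char_conj _ _
  have hA : A ^ 6 = 1 := by
    rw [← map_pow, conj_pow, show finRotate 6 ^ 6 = 1 by decide, mul_one, mul_inv_cancel, map_one]
  have heig (η : ℂ) : A.HasEigenvalue η ↔ η ^ 6 = 1 ∧ η ^ 2 + η + 1 ≠ 0 := by
    rw [Module.End.hasEigenvalue_iff_of_pow_eq_one (by norm_num) hA, and_congr_right_iff]
    intro hη
    simp only [htrace, ne_eq, sum_inv_pow_mul_chiLambda_finRotate_eq_zero_iff hη]
  have hsep : (X ^ 6 - 1 : ℂ[X]).Separable := by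
    simpa using separable_X_pow_sub_C (1 : ℂ) (by norm_num : ((6 : ℕ) : ℂ) ≠ 0) one_ne_zero
  have hq : (X ^ 4 - X ^ 3 + X - 1 : ℂ[X]) * (X ^ 2 + X + 1) = X ^ 6 - 1 := by ring
  have hminpoly : minpoly ℂ A = X ^ 4 - X ^ 3 + X - 1 :=
    eq_of_monic_of_separable_of_isRoot_iff (minpoly.monic (Algebra.IsIntegral.isIntegral A))
      (by monicity!) (hsep.of_dvd (minpoly.dvd ℂ A (by simp [hA])))
      (hsep.of_dvd (Dvd.intro _ hq)) fun η => by
        rw [← Module.End.hasEigenvalue_iff_isRoot, heig,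
          isRoot_X_pow_four_sub_X_pow_three_add_X_sub_one_iff]
  exact ⟨hminpoly ▸ hq, heig⟩
end
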